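/- arXiv:2208.02767 — 9 statements merged into one kernel-verified Lean document; each statement's English description precedes it below -/
import Mathlib

section
/- For any multi-index ν ∈ ℕ^d with |ν| ≥ 1, the sum over all multi-indices m with 0 ≠ m ≠ ν and m ≤ ν of C(ν,m)·|m|!·(|ν|−|m|)! equals |ν|!·(|ν|−1), where C(ν,m) = ∏_j C(ν_j, m_j). -/
open Finset

lemma vand_aux (d : ℕ) (ν : Fin d → ℕ) (k : ℕ) :
    ∑ m ∈ Fintype.piFinset (fun j => Finset.range (ν j + 1)),
      (if (∑ j, m j) = k then ∏ j, Nat.choose (ν j) (m j) else 0)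
      = Nat.choose (∑ j, ν j) k := by
  induction d generalizing k with
  | zero =>
    simp only [Finset.sum_const, Fin.sum_univ_zero, Fin.prod_univ_zero]
    cases k <;> simp
  | succ d ih =>
    have hsplit : Fintype.piFinset (fun j : Fin (d+1) => Finset.range (ν j + 1)) =
        ((Finset.range (ν 0 + 1)) ×ˢ
          Fintype.piFinset (fun j : Fin d => Finset.range (ν j.succ + 1))).map
          (Fin.consEquiv (fun _ => ℕ)).toEmbedding := by
      ext m
      simp [Finset.mem_map_equiv, Fintype.mem_piFinset, Fin.forall_fin_succ, Fin.tail]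
    rw [hsplit, Finset.sum_map, Finset.sum_product]
    simp only [Equiv.coe_toEmbedding, Fin.consEquiv_apply, Fin.sum_cons,
      Fin.prod_univ_succ, Fin.cons_zero, Fin.cons_succ]
    have hstep : ∀ a ∈ Finset.range (ν 0 + 1),
        (∑ m' ∈ Fintype.piFinset (fun j : Fin d => Finset.range (ν j.succ + 1)),
          (if a + ∑ j : Fin d, m' j = k
            then Nat.choose (ν 0) a * ∏ j : Fin d, Nat.choose (ν j.succ) (m' j)
            else 0))
        = if a ≤ k then Nat.choose (ν 0) a * Nat.choose (∑ j : Fin d, ν j.succ) (k - a) else 0 := by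
      intro a _
      by_cases hak : a ≤ k
      · simp only [if_pos hak]
        rw [← ih (fun j => ν j.succ) (k - a), Finset.mul_sum]
        refine Finset.sum_congr rfl fun m' _ => ?_
        have : a + ∑ j : Fin d, m' j = k ↔ ∑ j : Fin d, m' j = k - a := by omega
        simp only [this, mul_ite, mul_zero]
      · simp only [if_neg hak]
        refine Finset.sum_eq_zero fun m' _ => ?_
        have : ¬ (a + ∑ j : Fin d, m' j = k) := by omega
        rw [if_neg this]
    rw [Finset.sum_congr rfl hstep, Fin.sum_univ_succ, Nat.add_choose_eq,
      Finset.Nat.sum_antidiagonal_eq_sum_range_succ_mk]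
    set h : ℕ → ℕ := fun a => if a ≤ k then Nat.choose (ν 0) a * Nat.choose (∑ j : Fin d, ν j.succ) (k - a) else 0 with hh
    have h1 : ∑ a ∈ Finset.range (ν 0 + 1), h a = ∑ a ∈ Finset.range (ν 0 + k + 2), h a := by
      refine Finset.sum_subset (Finset.range_subset_range.2 (by omega)) fun a _ ha => ?_
      have : ν 0 < a := by simpa using ha
      simp only [hh]
      split
      · rw [Nat.choose_eq_zero_of_lt this, zero_mul]
      · rfl
    have h2 : ∑ a ∈ Finset.range (k + 1),
        Nat.choose (ν 0) a * Nat.choose (∑ j : Fin d, ν j.succ) (k - a)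
        = ∑ a ∈ Finset.range (ν 0 + k + 2), h a := by
      rw [← Finset.sum_subset (Finset.range_subset_range.2 (by omega) :
          Finset.range (k + 1) ⊆ Finset.range (ν 0 + k + 2))
          (fun a _ ha => by
            have : k < a := by simpa using ha
            simp [hh, Nat.not_le.2 this])]
      refine Finset.sum_congr rfl fun a ha => ?_
      have : a ≤ k := by simpa [Nat.lt_succ_iff] using ha
      simp [hh, this]
    rw [h1, h2]

theorem sum_choose_factorial_middle (d : ℕ) (ν : Fin d → ℕ) (hν : 1 ≤ ∑ j, ν j) :
    ∑ m ∈ (Fintype.piFinset fun j => Finset.range (ν j + 1)).filter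
        (fun m => m ≠ 0 ∧ m ≠ ν),
      (∏ j, Nat.choose (ν j) (m j)) * (∑ j, m j).factorial *
        ((∑ j, ν j) - (∑ j, m j)).factorial
      = (∑ j, ν j).factorial * ((∑ j, ν j) - 1) := by
  classical
  set n := ∑ j, ν j with hn
  set f : (Fin d → ℕ) → ℕ := fun m =>
    (∏ j, Nat.choose (ν j) (m j)) * (∑ j, m j).factorial * (n - ∑ j, m j).factorial with hf
  set S := Fintype.piFinset fun j => Finset.range (ν j + 1) with hS
  have hfull : ∑ m ∈ S, f m = (n + 1) * n.factorial := by
    have step1 : ∀ m ∈ S, f m = ∑ k ∈ Finset.range (n + 1),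
        if (∑ j, m j) = k then
          (∏ j, Nat.choose (ν j) (m j)) * k.factorial * (n - k).factorial else 0 := by
      intro m hm
      rw [Finset.sum_ite_eq]
      have hle : ∑ j, m j ≤ n := by
        refine Finset.sum_le_sum fun j _ => ?_
        have := Fintype.mem_piFinset.1 hm j
        simpa [Nat.lt_succ_iff] using this
      rw [if_pos (Finset.mem_range.2 (by omega))]
    rw [Finset.sum_congr rfl step1, Finset.sum_comm]
    have step2 : ∀ k ∈ Finset.range (n + 1),
        (∑ m ∈ S, if (∑ j, m j) = k then
          (∏ j, Nat.choose (ν j) (m j)) * k.factorial * (n - k).factorial else 0)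
        = n.factorial := by
      intro k hk
      have : ∀ m ∈ S, (if (∑ j, m j) = k then
          (∏ j, Nat.choose (ν j) (m j)) * k.factorial * (n - k).factorial else 0)
          = (if (∑ j, m j) = k then (∏ j, Nat.choose (ν j) (m j)) else 0)
            * (k.factorial * (n - k).factorial) := by
        intro m _
        split <;> ring
      rw [Finset.sum_congr rfl this, ← Finset.sum_mul, hS, vand_aux d ν k, ← hn,
        ← mul_assoc]
      exact Nat.choose_mul_factorial_mul_factorial (Finset.mem_range_succ_iff.mp hk)
    rw [Finset.sum_congr rfl step2, Finset.sum_const, Finset.card_range, smul_eq_mul]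
  have h0S : (0 : Fin d → ℕ) ∈ S := by
    simp [hS, Fintype.mem_piFinset]
  have hνS : ν ∈ S := by
    simp [hS, Fintype.mem_piFinset, Nat.lt_succ_iff]
  have hν0 : ν ≠ 0 := by
    intro h
    rw [h] at hn
    simp at hn
    omega
  have hfilter : S.filter (fun m => ¬(m ≠ 0 ∧ m ≠ ν)) = {0, ν} := by
    ext m
    simp only [Finset.mem_filter, not_and_or, not_not, Finset.mem_insert,
      Finset.mem_singleton]
    constructor
    · rintro ⟨-, h⟩; exact h
    · rintro (rfl | rfl)
      exacts [⟨h0S, Or.inl rfl⟩, ⟨hνS, Or.inr rfl⟩]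
  have hsplit := Finset.sum_filter_add_sum_filter_not S (fun m => m ≠ 0 ∧ m ≠ ν) f
  rw [hfilter, hfull] at hsplit
  have hpair : ∑ m ∈ ({0, ν} : Finset (Fin d → ℕ)), f m = n.factorial + n.factorial := by
    rw [Finset.sum_insert (by simpa using (Ne.symm hν0)), Finset.sum_singleton]
    have hf0 : f 0 = n.factorial := by simp [hf]
    have hfν : f ν = n.factorial := by simp [hf, ← hn]
    rw [hf0, hfν]
  rw [hpair] at hsplit
  have h3 : (n + 1) * n.factorial = n.factorial * (n - 1) + (n.factorial + n.factorial) := by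
    have h4 : n + 1 = (n - 1) + 2 := by omega
    rw [h4, add_mul, two_mul, mul_comm]
  rw [h3] at hsplit
  exact Nat.add_right_cancel hsplit
end

section
/- For any multi-index ν ∈ ℕ^d, the sum over all m ≤ ν of C(ν,m)·|m|!·(|ν|−|m|+1)! equals (|ν|+2)!/2, where C(ν,m) = ∏_j C(ν_j,m_j). -/
open Finset Polynomial

lemma x_add_one_pow (a : ℕ) :
    (X + 1 : Polynomial ℕ) ^ a = ∑ i ∈ Finset.range (a + 1), C ((a.choose i : ℕ)) * X ^ i := by
  rw [add_pow]
  refine Finset.sum_congr rfl fun i _ => ?_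
  simp [C_eq_natCast, mul_comm]

lemma multi_vandermonde (d : ℕ) (ν : Fin d → ℕ) (k : ℕ) :
    ∑ m ∈ (Fintype.piFinset fun j => Finset.range (ν j + 1)) with (∑ j, m j) = k,
      ∏ j, Nat.choose (ν j) (m j) = (∑ j, ν j).choose k := by
  have h1 : ((X + 1 : Polynomial ℕ) ^ (∑ j, ν j)).coeff k = (∑ j, ν j).choose k := by
    rw [coeff_X_add_one_pow]; exact Nat.cast_id _
  have h2 : (X + 1 : Polynomial ℕ) ^ (∑ j, ν j)
      = ∑ m ∈ Fintype.piFinset fun j => Finset.range (ν j + 1),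
          (C ((∏ j, Nat.choose (ν j) (m j) : ℕ)) * X ^ (∑ j, m j)) := by
    rw [← Finset.prod_pow_eq_pow_sum]
    calc (∏ j, (X + 1 : Polynomial ℕ) ^ ν j)
        = ∏ j, ∑ i ∈ Finset.range (ν j + 1), C ((ν j).choose i : ℕ) * X ^ i := by
          exact Finset.prod_congr rfl fun j _ => x_add_one_pow (ν j)
      _ = ∑ m ∈ Fintype.piFinset fun j => Finset.range (ν j + 1),
            ∏ j, (C (((ν j).choose (m j) : ℕ)) * X ^ (m j)) :=
          Finset.prod_univ_sum _ _
      _ = _ := by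
          refine Finset.sum_congr rfl fun m _ => ?_
          rw [Finset.prod_mul_distrib, ← map_prod, Finset.prod_pow_eq_pow_sum]
  rw [h2] at h1
  rw [finset_sum_coeff] at h1
  simp only [coeff_C_mul, coeff_X_pow, mul_ite, mul_one, mul_zero] at h1
  rw [← h1, Finset.sum_filter]
  refine Finset.sum_congr rfl fun m _ => ?_
  by_cases h : (∑ j, m j) = k
  · simp [h]
  · rw [if_neg h, if_neg fun hk => h hk.symm]

lemma scalar_sum (n : ℕ) :
    2 * ∑ k ∈ Finset.range (n + 1), n.choose k * k.factorial * (n - k + 1).factorial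
      = (n + 2).factorial := by
  have h1 : ∀ k ∈ Finset.range (n + 1),
      n.choose k * k.factorial * (n - k + 1).factorial = n.factorial * (n - k + 1) := by
    intro k hk
    have hk' : k ≤ n := Nat.lt_succ_iff.mp (Finset.mem_range.mp hk)
    rw [Nat.factorial_succ]
    calc n.choose k * k.factorial * ((n - k + 1) * (n - k).factorial)
        = (n.choose k * k.factorial * (n - k).factorial) * (n - k + 1) := by ring
      _ = n.factorial * (n - k + 1) := by rw [Nat.choose_mul_factorial_mul_factorial hk']
  rw [Finset.sum_congr rfl h1, ← Finset.mul_sum]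
  have h2 : ∑ k ∈ Finset.range (n + 1), (n - k + 1) = ∑ k ∈ Finset.range (n + 1), (k + 1) := by
    rw [← Finset.sum_range_reflect]
    refine Finset.sum_congr rfl fun k hk => ?_
    have : k ≤ n := Nat.lt_succ_iff.mp (Finset.mem_range.mp hk)
    omega
  have h3 : ∑ k ∈ Finset.range (n + 1), (k + 1) = ∑ i ∈ Finset.range (n + 2), i := by
    rw [Finset.sum_range_succ' (fun i => i) (n + 1)]; simp
  have h4 := Finset.sum_range_id_mul_two (n + 2)
  have h4' : (∑ i ∈ Finset.range (n + 2), i) * 2 = (n + 2) * (n + 1) := by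
    rw [h4]
    rfl
  rw [h2, h3]
  calc 2 * (n.factorial * ∑ i ∈ Finset.range (n + 2), i)
      = n.factorial * ((∑ i ∈ Finset.range (n + 2), i) * 2) := by ring
    _ = n.factorial * ((n + 2) * (n + 1)) := by rw [h4']
    _ = (n + 2).factorial := by rw [Nat.factorial_succ, Nat.factorial_succ]; ring

theorem sum_choose_factorial_succ (d : ℕ) (ν : Fin d → ℕ) :
    ∑ m ∈ Fintype.piFinset fun j => Finset.range (ν j + 1),
      (∏ j, Nat.choose (ν j) (m j)) * (∑ j, m j).factorial *
        ((∑ j, ν j) - (∑ j, m j) + 1).factorial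
      = ((∑ j, ν j) + 2).factorial / 2 := by
  set n := ∑ j, ν j with hn
  have hmaps : ∀ m ∈ Fintype.piFinset fun j => Finset.range (ν j + 1),
      (∑ j, m j) ∈ Finset.range (n + 1) := by
    intro m hm
    rw [Finset.mem_range, Nat.lt_succ_iff, hn]
    exact Finset.sum_le_sum fun j _ => Nat.lt_succ_iff.mp
      (Finset.mem_range.mp (Fintype.mem_piFinset.mp hm j))
  rw [← Finset.sum_fiberwise_of_maps_to hmaps]
  have key : ∀ k ∈ Finset.range (n + 1),
      (∑ m ∈ (Fintype.piFinset fun j => Finset.range (ν j + 1)) with (∑ j, m j) = k,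
        (∏ j, Nat.choose (ν j) (m j)) * (∑ j, m j).factorial * (n - (∑ j, m j) + 1).factorial)
      = n.choose k * k.factorial * (n - k + 1).factorial := by
    intro k _
    rw [← multi_vandermonde d ν k, Finset.sum_mul, Finset.sum_mul]
    refine Finset.sum_congr rfl fun m hm => ?_
    rw [(Finset.mem_filter.mp hm).2]
  rw [Finset.sum_congr rfl key]
  have := scalar_sum n
  omega
end

section
/- Let c > 0 and let ρ be a sequence of nonnegative reals. Suppose (A_{ν,λ}) for multi-indices ν ∈ ℕ^d and λ ∈ ℕ satisfies A_{ν,0} = δ_{ν,0}, A_{ν,λ} = 0 for λ > |ν|, and A_{ν+e_j,λ} ≤ ∑_{m ≤ ν} C(ν,m)·c·ρ^{ν−m+e_j}·(|ν|−|m|+2)!·A_{m,λ−1} for all j and 1 ≤ λ ≤ |ν|+1. Then for all ν ≠ 0 and 1 ≤ λ ≤ |ν|, A_{ν,λ} ≤ c^λ · ρ^ν · ∑_{k=1}^{λ} (−1)^{λ+k}·(|ν|+2k−1)! / ((2k−1)!·(λ−k)!·k!). -/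
open Finset Polynomial

-- triangle swap
lemma tri_swap {M : Type*} [AddCommMonoid M] (n : ℕ) (F : ℕ → ℕ → M) :
    ∑ s ∈ range (n+1), ∑ t ∈ range (s+1), F t s
      = ∑ t ∈ range (n+1), ∑ s ∈ Icc t n, F t s := by
  have h1 : ∀ s ∈ range (n+1), ∑ t ∈ range (s+1), F t s
      = ∑ t ∈ range (n+1), if t ≤ s then F t s else 0 := by
    intro s hs
    rw [← Finset.sum_filter]
    apply Finset.sum_congr _ (fun _ _ => rfl)
    ext t
    simp only [mem_filter, mem_range] at *
    omega
  rw [Finset.sum_congr rfl h1, Finset.sum_comm]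
  apply Finset.sum_congr rfl
  intro t ht
  rw [← Finset.sum_filter]
  apply Finset.sum_congr _ (fun _ _ => rfl)
  ext s
  simp only [mem_filter, mem_range, mem_Icc, mem_range] at *
  omega

lemma vand : ∀ p q n : ℕ, ∑ s ∈ range (n+1), ((s+p).choose p) * ((n-s+q).choose q)
    = (n+p+q+1).choose (p+q+1) := by
  intro p
  induction p with
  | zero =>
    intro q n
    simp only [Nat.add_zero, Nat.choose_zero_right, one_mul, Nat.zero_add]
    have := Finset.sum_range_reflect (fun u => (u+q).choose q) (n+1)
    simp only [Nat.add_sub_cancel] at this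
    rw [this, Nat.sum_range_add_choose n q]
  | succ p ih =>
    intro q n
    have hexp : ∀ s, (s+(p+1)).choose (p+1) = ∑ t ∈ range (s+1), (t+p).choose p := by
      intro s
      rw [Nat.sum_range_add_choose s p]
      rfl
    calc ∑ s ∈ range (n+1), (s+(p+1)).choose (p+1) * ((n-s+q).choose q)
        = ∑ s ∈ range (n+1), ∑ t ∈ range (s+1), (t+p).choose p * ((n-s+q).choose q) := by
          apply Finset.sum_congr rfl; intro s _; rw [hexp, Finset.sum_mul]
      _ = ∑ t ∈ range (n+1), ∑ s ∈ Icc t n, (t+p).choose p * ((n-s+q).choose q) :=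
          tri_swap n _
      _ = ∑ t ∈ range (n+1), (t+p).choose p * ((n-t+(q+1)).choose (q+1)) := by
          apply Finset.sum_congr rfl
          intro t ht
          rw [← Finset.mul_sum]
          congr 1
          have ht' : t ≤ n := by simpa [Nat.lt_succ_iff] using ht
          have h2 : ∑ s ∈ Icc t n, (n-s+q).choose q
              = ∑ u ∈ range (n-t+1), (u+q).choose q := by
            rw [← Finset.Ico_add_one_right_eq_Icc]
            rw [Finset.sum_Ico_reflect (fun u => (u+q).choose q) t (le_refl (n+1))]
            rw [Nat.sub_self, ← Nat.Ico_zero_eq_range]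
            have : n + 1 - t = n - t + 1 := by omega
            rw [this]
          rw [h2, Nat.sum_range_add_choose (n-t) q]
          congr 1
      _ = (n+p+(q+1)+1).choose (p+(q+1)+1) := ih (q+1) n
      _ = (n+(p+1)+q+1).choose ((p+1)+q+1) := by congr 1 <;> omega


noncomputable def Bf (n lam : ℕ) : ℝ :=
  ∑ k ∈ Finset.Icc 1 lam,
    (-1 : ℝ) ^ (lam + k) * ((n + 2 * k - 1).factorial : ℝ) /
      (((2 * k - 1).factorial : ℝ) * ((lam - k).factorial : ℝ) * (k.factorial : ℝ))

lemma fne (m : ℕ) : ((m.factorial : ℝ)) ≠ 0 :=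
  Nat.cast_ne_zero.2 (Nat.factorial_ne_zero m)

lemma sumid (n k : ℕ) (hk : 1 ≤ k) :
    ∑ s ∈ range (n+1), (n.choose s : ℝ) * ((n-s+2).factorial : ℝ) * ((s+2*k-1).factorial : ℝ)
      = (n.factorial : ℝ) * 2 * ((2*k-1).factorial : ℝ) * ((n+2*k+2).choose (2*k+2) : ℝ) := by
  have step : ∀ s ∈ range (n+1),
      (n.choose s : ℝ) * ((n-s+2).factorial : ℝ) * ((s+2*k-1).factorial : ℝ)
        = (n.factorial : ℝ) * 2 * ((2*k-1).factorial : ℝ) *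
            (((s+(2*k-1)).choose (2*k-1) * ((n-s)+2).choose 2 : ℕ) : ℝ) := by
    intro s hs
    have hs' : s ≤ n := by simpa [Nat.lt_succ_iff] using hs
    have e0 : (n.choose s : ℝ) = (n.factorial : ℝ) / ((s.factorial : ℝ) * ((n-s).factorial : ℝ)) :=
      Nat.cast_choose ℝ hs'
    have e1 : (((s+(2*k-1)).choose (2*k-1)) : ℝ)
        = ((s+2*k-1).factorial : ℝ) / (((2*k-1).factorial : ℝ) * (s.factorial : ℝ)) := by
      rw [Nat.cast_choose ℝ (by omega : 2*k-1 ≤ s+(2*k-1))]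
      rw [show s+(2*k-1) = s+2*k-1 by omega, show s+2*k-1-(2*k-1) = s by omega]
    have e2 : ((((n-s)+2).choose 2) : ℝ)
        = ((n-s+2).factorial : ℝ) / (2 * ((n-s).factorial : ℝ)) := by
      rw [Nat.cast_choose ℝ (by omega : 2 ≤ (n-s)+2)]
      rw [show (n-s)+2-2 = n-s by omega]
      norm_num [Nat.factorial]
    push_cast
    rw [e0, e1, e2]
    field_simp
  rw [Finset.sum_congr rfl step, ← Finset.mul_sum, ← Nat.cast_sum]
  rw [vand (2*k-1) 2 n]
  norm_cast
  rw [show n+(2*k-1)+2+1 = n+2*k+2 by omega, show (2*k-1)+2+1 = 2*k+2 by omega]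

lemma Bf_zero (μ : ℕ) (hμ : 1 ≤ μ) : Bf 0 μ = (-1:ℝ)^(μ+1) / (μ.factorial : ℝ) := by
  unfold Bf
  have step : ∀ k ∈ Icc 1 μ,
      (-1 : ℝ) ^ (μ + k) * ((0 + 2 * k - 1).factorial : ℝ) /
        (((2 * k - 1).factorial : ℝ) * ((μ - k).factorial : ℝ) * (k.factorial : ℝ))
      = (-1:ℝ)^μ / (μ.factorial : ℝ) * ((-1:ℝ)^k * (μ.choose k : ℝ)) := by
    intro k hk
    have hk' : k ≤ μ := (mem_Icc.mp hk).2
    have e0 : (μ.choose k : ℝ) = (μ.factorial : ℝ) / ((k.factorial : ℝ) * ((μ-k).factorial : ℝ)) :=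
      Nat.cast_choose ℝ hk'
    rw [show (0:ℕ) + 2*k - 1 = 2*k-1 by omega, e0, pow_add]
    field_simp
  rw [Finset.sum_congr rfl step, ← Finset.mul_sum]
  have halt : ∑ k ∈ Icc 1 μ, ((-1:ℝ)^k * (μ.choose k : ℝ)) = -1 := by
    have h0 : (∑ m ∈ range (μ + 1), ((-1) ^ m * μ.choose m : ℤ)) = 0 :=
      Int.alternating_sum_range_choose_of_ne (by omega)
    have hins : range (μ+1) = insert 0 (Icc 1 μ) := by ext; simp [Nat.lt_succ_iff]; omega
    rw [hins, Finset.sum_insert (by simp)] at h0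
    simp only [pow_zero, Nat.choose_zero_right, Nat.cast_one, one_mul] at h0
    have : (∑ k ∈ Icc 1 μ, ((-1) ^ k * μ.choose k : ℤ)) = -1 := by omega
    exact_mod_cast this
  rw [halt, pow_add]
  ring

lemma Brec (n lam : ℕ) (h : 2 ≤ lam) :
    ∑ s ∈ Icc 1 n, (n.choose s : ℝ) * ((n-s+2).factorial : ℝ) * Bf s (lam-1)
      = Bf (n+1) lam := by
  obtain ⟨μ, rfl⟩ : ∃ μ, lam = μ + 1 := ⟨lam-1, by omega⟩
  have hμ : 1 ≤ μ := by omega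
  simp only [Nat.add_sub_cancel]
  -- full sum over range (n+1)
  have hins : range (n+1) = insert 0 (Icc 1 n) := by ext; simp [Nat.lt_succ_iff]; omega
  have hfull : ∑ s ∈ range (n+1), (n.choose s : ℝ) * ((n-s+2).factorial : ℝ) * Bf s μ
      = ((n+2).factorial : ℝ) * ((-1:ℝ)^(μ+1) / (μ.factorial : ℝ))
        + ∑ s ∈ Icc 1 n, (n.choose s : ℝ) * ((n-s+2).factorial : ℝ) * Bf s μ := by
    rw [hins, Finset.sum_insert (by simp)]
    congr 1
    rw [Bf_zero μ hμ]
    norm_num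
  -- compute full sum by swapping
  have hswap : ∑ s ∈ range (n+1), (n.choose s : ℝ) * ((n-s+2).factorial : ℝ) * Bf s μ
      = ∑ k ∈ Icc 1 μ, (-1:ℝ)^(μ+k) * 2 * (n.factorial : ℝ) * ((n+2*k+2).choose (2*k+2) : ℝ)
          / (((μ-k).factorial : ℝ) * (k.factorial : ℝ)) := by
    unfold Bf
    rw [Finset.sum_congr rfl (fun s _ => Finset.mul_sum ..)]
    rw [Finset.sum_comm]
    apply Finset.sum_congr rfl
    intro k hk
    have hk1 : 1 ≤ k := (mem_Icc.mp hk).1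
    have step : ∀ s ∈ range (n+1),
        (n.choose s : ℝ) * ((n-s+2).factorial : ℝ) *
          ((-1:ℝ)^(μ+k) * ((s + 2*k - 1).factorial : ℝ) /
            (((2*k-1).factorial : ℝ) * ((μ-k).factorial : ℝ) * (k.factorial : ℝ)))
        = ((n.choose s : ℝ) * ((n-s+2).factorial : ℝ) * ((s+2*k-1).factorial : ℝ)) *
            ((-1:ℝ)^(μ+k) / (((2*k-1).factorial : ℝ) * ((μ-k).factorial : ℝ) * (k.factorial : ℝ))) := by
      intro s _; ring
    rw [Finset.sum_congr rfl step, ← Finset.sum_mul, sumid n k hk1]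
    field_simp
  -- RHS decomposition
  have hrhs : Bf (n+1) (μ+1)
      = (-1:ℝ)^μ * ((n+2).factorial : ℝ) / (μ.factorial : ℝ)
        + ∑ k ∈ Icc 1 μ, (-1:ℝ)^(μ+k) * 2 * (n.factorial : ℝ) * ((n+2*k+2).choose (2*k+2) : ℝ)
            / (((μ-k).factorial : ℝ) * (k.factorial : ℝ)) := by
    unfold Bf
    have hins2 : Icc 1 (μ+1) = insert 1 (Icc 2 (μ+1)) := by ext; simp; omega
    rw [hins2, Finset.sum_insert (by simp)]
    congr 1
    · rw [show (μ:ℕ)+1+1 = μ+2 by omega, show (n:ℕ)+1+2*1-1 = n+2 by omega]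
      rw [show (2*1-1 : ℕ) = 1 by omega, show (μ+1-1 : ℕ) = μ by omega]
      simp [Nat.factorial_one]
      rw [pow_add]
      ring
    · -- reindex k → k+1
      have hmap : Icc 2 (μ+1) = Finset.map (addRightEmbedding 1) (Icc 1 μ) := by
        rw [Finset.map_add_right_Icc]
      rw [hmap, Finset.sum_map]
      apply Finset.sum_congr rfl
      intro k hk
      have hk1 : 1 ≤ k := (mem_Icc.mp hk).1
      have hkμ : k ≤ μ := (mem_Icc.mp hk).2
      simp only [addRightEmbedding_apply]
      rw [show (n:ℕ)+1+2*(k+1)-1 = n+2*k+2 by omega, show 2*(k+1)-1 = 2*k+1 by omega,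
        show (μ+1)-(k+1) = μ-k by omega, show (μ+1)+(k+1) = (μ+k)+2 by omega]
      rw [Nat.cast_choose ℝ (by omega : 2*k+2 ≤ n+2*k+2), show n+2*k+2-(2*k+2) = n by omega]
      have f1 : ((2*k+2).factorial : ℝ) = (2*k+2) * ((2*k+1).factorial : ℝ) := by
        rw [show 2*k+2 = (2*k+1)+1 by omega, Nat.factorial_succ]; push_cast; ring
      have f2 : ((k+1).factorial : ℝ) = (k+1) * (k.factorial : ℝ) := by
        rw [Nat.factorial_succ]; push_cast; ring
      rw [pow_add, f1, f2]
      field_simp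
  rw [hrhs, ← hswap, hfull]
  rw [pow_add]
  field_simp
  ring

lemma Bnonneg : ∀ lam, 1 ≤ lam → ∀ s, 1 ≤ s → 0 ≤ Bf s lam := by
  intro lam
  induction lam with
  | zero => omega
  | succ μ ih =>
    intro _ s hs
    rcases Nat.eq_zero_or_pos μ with hμ | hμ
    · subst hμ
      unfold Bf
      rw [show Icc 1 1 = {1} from rfl, Finset.sum_singleton]
      rw [show (2*1-1:ℕ) = 1 by omega, show (1-1:ℕ) = 0 by omega]
      simp [Nat.factorial_one, Nat.factorial_zero]
    · obtain ⟨n, rfl⟩ : ∃ n, s = n + 1 := ⟨s-1, by omega⟩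
      rw [← Brec n (μ+1) (by omega)]
      simp only [Nat.add_sub_cancel]
      apply Finset.sum_nonneg
      intro s' hs'
      have h1 : 1 ≤ s' := (mem_Icc.mp hs').1
      have := ih hμ s' h1
      positivity

lemma count_fiber {d : ℕ} (ν : Fin d → ℕ) (s : ℕ) :
    ∑ m ∈ (Fintype.piFinset fun i => range (ν i + 1)).filter (fun m => ∑ i, m i = s),
      ∏ i, (ν i).choose (m i) = (∑ i, ν i).choose s := by
  have hpoly : ∀ i : Fin d, ((X + 1 : Polynomial ℕ) ^ (ν i))
      = ∑ j ∈ range (ν i + 1), (C ((ν i).choose j)) * X ^ j := by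
    intro i
    rw [add_pow]
    apply Finset.sum_congr rfl
    intro j _
    rw [one_pow]
    ring_nf
    rw [← Polynomial.C_eq_natCast, Nat.cast_id]
  have key : ((X + 1 : Polynomial ℕ) ^ (∑ i, ν i))
      = ∑ m ∈ Fintype.piFinset fun i => range (ν i + 1),
          (C (∏ i, (ν i).choose (m i))) * X ^ (∑ i, m i) := by
    rw [← Finset.prod_pow_eq_pow_sum]
    rw [Finset.prod_congr rfl (fun i _ => hpoly i)]
    rw [Finset.prod_univ_sum]
    apply Finset.sum_congr rfl
    intro m _
    rw [Finset.prod_mul_distrib, ← Finset.prod_pow_eq_pow_sum, map_prod]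
  have hc := congrArg (fun p => Polynomial.coeff p s) key
  simp only [coeff_X_add_one_pow, Polynomial.finset_sum_coeff, Polynomial.coeff_C_mul,
    Polynomial.coeff_X_pow, Nat.cast_id] at hc
  rw [hc, Finset.sum_filter]
  apply Finset.sum_congr rfl
  intro m _
  by_cases h : (∑ i, m i) = s
  · simp [h]
  · simp only [h, if_false]
    rw [if_neg (fun hh : s = ∑ i, m i => h hh.symm)]
    simp

lemma box_sum {d : ℕ} (ν : Fin d → ℕ) (f : ℕ → ℝ) :
    ∑ m ∈ Fintype.piFinset fun i => range (ν i + 1),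
        (∏ i, ((ν i).choose (m i) : ℝ)) * f (∑ i, m i)
      = ∑ s ∈ range ((∑ i, ν i) + 1), ((∑ i, ν i).choose s : ℝ) * f s := by
  have maps : ∀ m ∈ Fintype.piFinset fun i => range (ν i + 1),
      (∑ i, m i) ∈ range ((∑ i, ν i) + 1) := by
    intro m hm
    simp only [Fintype.mem_piFinset, mem_range, Nat.lt_succ_iff] at *
    exact Finset.sum_le_sum fun i _ => by have := hm i; omega
  rw [← Finset.sum_fiberwise_of_maps_to maps]
  apply Finset.sum_congr rfl
  intro s _
  have h1 : ∀ m ∈ (Fintype.piFinset fun i => range (ν i + 1)).filter (fun m => ∑ i, m i = s),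
      (∏ i, ((ν i).choose (m i) : ℝ)) * f (∑ i, m i)
        = (∏ i, ((ν i).choose (m i) : ℝ)) * f s := by
    intro m hm
    rw [(mem_filter.mp hm).2]
  rw [Finset.sum_congr rfl h1, ← Finset.sum_mul]
  congr 1
  rw [← count_fiber ν s]
  push_cast
  rfl

theorem recursion_bound {d : ℕ} (c : ℝ) (hc : 0 < c)
    (ρ : Fin d → ℝ) (hρ : ∀ j, 0 ≤ ρ j)
    (A : (Fin d → ℕ) → ℕ → ℝ)
    (hA0 : ∀ ν : Fin d → ℕ, A ν 0 = if ν = 0 then 1 else 0)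
    (hAz : ∀ (ν : Fin d → ℕ) (lam : ℕ), (∑ i, ν i) < lam → A ν lam = 0)
    (hrec : ∀ (j : Fin d) (ν : Fin d → ℕ) (lam : ℕ), 1 ≤ lam → lam ≤ (∑ i, ν i) + 1 →
      A (ν + Pi.single j 1) lam ≤
        ∑ m ∈ Fintype.piFinset fun i => Finset.range (ν i + 1),
          (∏ i, ((ν i).choose (m i) : ℝ)) * c *
            (∏ i, ρ i ^ ((ν - m + Pi.single j 1 : Fin d → ℕ) i)) *
            (((∑ i, ν i) - (∑ i, m i) + 2).factorial : ℝ) * A m (lam - 1)) :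
    ∀ ν : Fin d → ℕ, ν ≠ 0 → ∀ lam : ℕ, 1 ≤ lam → lam ≤ ∑ i, ν i →
      A ν lam ≤ c ^ lam * (∏ i, ρ i ^ ν i) *
        ∑ k ∈ Finset.Icc 1 lam,
          (-1 : ℝ) ^ (lam + k) * (((∑ i, ν i) + 2 * k - 1).factorial : ℝ) /
            (((2 * k - 1).factorial : ℝ) * ((lam - k).factorial : ℝ) * (k.factorial : ℝ)) := by
  suffices H : ∀ n : ℕ, ∀ ν : Fin d → ℕ, (∑ i, ν i) = n → ν ≠ 0 → ∀ lam : ℕ, 1 ≤ lam → lam ≤ n →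
      A ν lam ≤ c ^ lam * (∏ i, ρ i ^ ν i) * Bf n lam by
    intro ν hν lam h1 h2
    have := H (∑ i, ν i) ν rfl hν lam h1 h2
    unfold Bf at this
    exact this
  intro n
  induction n using Nat.strong_induction_on with
  | _ n ih =>
  intro ν hn hν lam hlam1 hlamn
  obtain ⟨n', rfl⟩ : ∃ n', n = n' + 1 := ⟨n - 1, by omega⟩
  obtain ⟨j, hj⟩ : ∃ j, ν j ≠ 0 := Function.ne_iff.mp hν
  set ν' : Fin d → ℕ := Function.update ν j (ν j - 1) with hν'def
  have hcons : ν' + Pi.single j 1 = ν := by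
    funext i
    by_cases h : i = j
    · subst h
      simp only [Pi.add_apply, hν'def, Function.update_self, Pi.single_eq_same]
      omega
    · simp only [Pi.add_apply, hν'def, Function.update_of_ne h, Pi.single_eq_of_ne h, add_zero]
  have hsum' : (∑ i, ν' i) = n' := by
    have h1 := congrArg (fun g : Fin d → ℕ => ∑ i, g i) hcons
    simp only [Pi.add_apply, Finset.sum_add_distrib] at h1
    rw [Finset.sum_pi_single'] at h1
    simp only [Finset.mem_univ, if_true] at h1
    omega
  have hmle : ∀ m, m ∈ (Fintype.piFinset fun i => Finset.range (ν' i + 1)) →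
      (∀ i, m i ≤ ν' i) ∧ (∑ i, m i) ≤ n' := by
    intro m hm
    simp only [Fintype.mem_piFinset, mem_range, Nat.lt_succ_iff] at hm
    refine ⟨hm, ?_⟩
    rw [← hsum']
    exact Finset.sum_le_sum fun i _ => hm i
  have hrec' := hrec j ν' lam hlam1 (by rw [hsum']; omega)
  rw [hcons, hsum'] at hrec'
  have hρprod : ∀ m, (∀ i, m i ≤ ν' i) →
      (∏ i, ρ i ^ ((ν' - m + Pi.single j 1 : Fin d → ℕ) i)) * (∏ i, ρ i ^ m i)
        = ∏ i, ρ i ^ ν i := by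
    intro m hm
    rw [← Finset.prod_mul_distrib]
    apply Finset.prod_congr rfl
    intro i _
    rw [← pow_add]
    congr 1
    have hci := congrFun hcons i
    simp only [Pi.add_apply, Pi.sub_apply] at hci ⊢
    have := hm i
    omega
  have hρn : (0:ℝ) ≤ ∏ i, ρ i ^ ν i := Finset.prod_nonneg fun i _ => pow_nonneg (hρ i) _
  rcases eq_or_lt_of_le hlam1 with h1 | hlam2
  · -- lam = 1
    have hl : lam = 1 := h1.symm
    subst hl
    have hS : (∑ m ∈ Fintype.piFinset fun i => Finset.range (ν' i + 1),
        (∏ i, ((ν' i).choose (m i) : ℝ)) * c *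
          (∏ i, ρ i ^ ((ν' - m + Pi.single j 1 : Fin d → ℕ) i)) *
          ((n' - (∑ i, m i) + 2).factorial : ℝ) * A m (1 - 1))
        = c * (∏ i, ρ i ^ ν i) * ((n' + 2).factorial : ℝ) := by
      have hmem : (0 : Fin d → ℕ) ∈ Fintype.piFinset fun i => Finset.range (ν' i + 1) := by
        simp [Fintype.mem_piFinset]
      rw [Finset.sum_eq_single_of_mem (0 : Fin d → ℕ) hmem
        (fun m _ hm0 => by rw [show (1:ℕ) - 1 = 0 from rfl, hA0 m, if_neg hm0, mul_zero])]
      simp only [Pi.zero_apply, Nat.choose_zero_right, Nat.cast_one, Finset.prod_const_one,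
        Finset.sum_const_zero, Nat.sub_zero, one_mul]
      have h0 : (ν' - 0 + Pi.single j 1 : Fin d → ℕ) = ν := by
        rw [tsub_zero]; exact hcons
      rw [h0, hA0]
      simp
    rw [hS] at hrec'
    refine le_trans hrec' (le_of_eq ?_)
    have hBf1 : Bf (n'+1) 1 = ((n' + 2).factorial : ℝ) := by
      unfold Bf
      rw [show Icc 1 1 = ({1} : Finset ℕ) from rfl, Finset.sum_singleton,
        show n' + 1 + 2*1 - 1 = n' + 2 by omega]
      norm_num
    rw [hBf1, pow_one]
  · -- lam ≥ 2
    obtain ⟨μ, rfl⟩ : ∃ μ, lam = μ + 1 := ⟨lam - 1, by omega⟩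
    have hμ1 : 1 ≤ μ := by omega
    simp only [Nat.add_sub_cancel] at hrec'
    have hAm : ∀ m ∈ (Fintype.piFinset fun i => Finset.range (ν' i + 1)),
        A m μ ≤ c ^ μ * (∏ i, ρ i ^ m i) *
          (if (∑ i, m i) < μ then 0 else Bf (∑ i, m i) μ) := by
      intro m hm
      by_cases h : (∑ i, m i) < μ
      · rw [hAz m μ h, if_pos h, mul_zero]
      · rw [if_neg h]
        push_neg at h
        have hm0 : m ≠ 0 := by
          intro h0
          rw [h0] at h
          simp at h
          omega
        exact ih (∑ i, m i) (by have := (hmle m hm).2; omega) m rfl hm0 μ hμ1 h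
    have hterm : ∀ m ∈ (Fintype.piFinset fun i => Finset.range (ν' i + 1)),
        (∏ i, ((ν' i).choose (m i) : ℝ)) * c *
          (∏ i, ρ i ^ ((ν' - m + Pi.single j 1 : Fin d → ℕ) i)) *
          ((n' - (∑ i, m i) + 2).factorial : ℝ) * A m μ
        ≤ c ^ (μ+1) * (∏ i, ρ i ^ ν i) *
            ((∏ i, ((ν' i).choose (m i) : ℝ)) * (((n' - (∑ i, m i) + 2).factorial : ℝ) *
              (if (∑ i, m i) < μ then 0 else Bf (∑ i, m i) μ))) := by
      intro m hm
      have hK : (0:ℝ) ≤ (∏ i, ((ν' i).choose (m i) : ℝ)) * c *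
          (∏ i, ρ i ^ ((ν' - m + Pi.single j 1 : Fin d → ℕ) i)) *
          ((n' - (∑ i, m i) + 2).factorial : ℝ) := by
        have h1 : (0:ℝ) ≤ ∏ i, ((ν' i).choose (m i) : ℝ) :=
          Finset.prod_nonneg fun i _ => Nat.cast_nonneg _
        have h2 : (0:ℝ) ≤ ∏ i, ρ i ^ ((ν' - m + Pi.single j 1 : Fin d → ℕ) i) :=
          Finset.prod_nonneg fun i _ => pow_nonneg (hρ i) _
        have h3 : (0:ℝ) ≤ ((n' - (∑ i, m i) + 2).factorial : ℝ) := Nat.cast_nonneg _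
        positivity
      calc (∏ i, ((ν' i).choose (m i) : ℝ)) * c *
          (∏ i, ρ i ^ ((ν' - m + Pi.single j 1 : Fin d → ℕ) i)) *
          ((n' - (∑ i, m i) + 2).factorial : ℝ) * A m μ
          ≤ (∏ i, ((ν' i).choose (m i) : ℝ)) * c *
            (∏ i, ρ i ^ ((ν' - m + Pi.single j 1 : Fin d → ℕ) i)) *
            ((n' - (∑ i, m i) + 2).factorial : ℝ) *
            (c ^ μ * (∏ i, ρ i ^ m i) * (if (∑ i, m i) < μ then 0 else Bf (∑ i, m i) μ)) :=
            mul_le_mul_of_nonneg_left (hAm m hm) hK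
        _ = c ^ (μ+1) * (∏ i, ρ i ^ ν i) *
            ((∏ i, ((ν' i).choose (m i) : ℝ)) * (((n' - (∑ i, m i) + 2).factorial : ℝ) *
              (if (∑ i, m i) < μ then 0 else Bf (∑ i, m i) μ))) := by
            rw [← hρprod m (hmle m hm).1, pow_succ]
            ring
    have hstep := le_trans hrec' (Finset.sum_le_sum hterm)
    rw [← Finset.mul_sum] at hstep
    refine le_trans hstep (mul_le_mul_of_nonneg_left ?_ (by positivity))
    -- remaining: ∑ m (∏C) * (fact * g) ≤ Bf (n'+1) (μ+1)
    rw [box_sum ν' (fun s => ((n' - s + 2).factorial : ℝ) * (if s < μ then 0 else Bf s μ)),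
      hsum']
    have hins : range (n'+1) = insert 0 (Icc 1 n') := by ext; simp [Nat.lt_succ_iff]; omega
    rw [hins, Finset.sum_insert (by simp)]
    rw [if_pos (show 0 < μ by omega), mul_zero, mul_zero, zero_add]
    rw [← Brec n' (μ+1) (by omega)]
    simp only [Nat.add_sub_cancel]
    apply Finset.sum_le_sum
    intro s hs
    have hs1 : 1 ≤ s := (mem_Icc.mp hs).1
    by_cases h : s < μ
    · rw [if_pos h, mul_zero, mul_zero]
      have h1 : (0:ℝ) ≤ Bf s μ := Bnonneg μ hμ1 s hs1
      have h2 : (0:ℝ) ≤ ((n' - s + 2).factorial : ℝ) := Nat.cast_nonneg _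
      have h3 : (0:ℝ) ≤ (n'.choose s : ℝ) := Nat.cast_nonneg _
      positivity
    · rw [if_neg h]
      exact le_of_eq (by ring)
end

section
/- For all integers v ≥ 1 and 1 ≤ λ ≤ v, one has ∑_{k=1}^{λ} (−1)^{λ+k}·(v+2k−1)! / ((2k−1)!·(λ−k)!·k!) = (v!/λ!)·∑_{k=0}^{λ} C(λ,k)·C(v−1, v−λ−k)·2^{λ−k}; in particular the left-hand side is nonnegative. -/
/-- Binomial coefficient with integer lower index, with the convention that it
vanishes for negative lower index. -/
def chooseZ (n : ℕ) (m : ℤ) : ℕ := if 0 ≤ m then n.choose m.toNat else 0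

/-! Divided by `v! / λ!`, both sides are the coefficient of `X^v` in
`(X + 1)^(v - 1) * ((X + 1)^2 - 1)^λ`: expanding `((X + 1)^2 - 1)^λ` binomially gives the
alternating sum, while the factorization `(X + 1)^2 - 1 = X * (X + 2)` gives the sum of
nonnegative terms. -/

open Polynomial Finset

lemma chooseZ_natCast_sub (n a b : ℕ) :
    chooseZ n ((a : ℤ) - b) = if b ≤ a then n.choose (a - b) else 0 := by
  unfold chooseZ
  by_cases hba : b ≤ a
  · rw [if_pos (by omega), if_pos hba, show ((a : ℤ) - b).toNat = a - b by omega]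
  · rw [if_neg (by omega), if_neg hba]

section Coefficients

variable {R : Type*} [CommRing R]

lemma coeff_X_add_one_pow_mul_sq_sub_one_pow_eq_alternating_sum (m n v : ℕ) :
    ((X + 1 : R[X]) ^ m * ((X + 1) ^ 2 - 1) ^ n).coeff v
      = ∑ k ∈ range (n + 1), (-1 : R) ^ (n + k) * n.choose k * (m + 2 * k).choose v := by
  have hterm : ∀ k, (X + 1 : R[X]) ^ m *
        ((-1) ^ (k + n) * ((X + 1) ^ 2) ^ k * 1 ^ (n - k) * (n.choose k : R[X]))
      = C ((-1 : R) ^ (n + k) * n.choose k) * (X + 1) ^ (m + 2 * k) := by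
    intro k
    simp only [map_mul, map_pow, map_neg, map_one, map_natCast, one_pow, ← pow_mul]
    ring
  simp only [sub_pow, mul_sum, hterm, finsetSum_coeff, coeff_C_mul, coeff_X_add_one_pow]

lemma coeff_X_add_one_pow_mul_sq_sub_one_pow_eq_sum (m n v : ℕ) :
    ((X + 1 : R[X]) ^ m * ((X + 1) ^ 2 - 1) ^ n).coeff v
      = ∑ j ∈ range (n + 1), (n.choose j : R) * chooseZ m ((v : ℤ) - n - j) * 2 ^ (n - j) := by
  have hfactor : ((X + 1 : R[X]) ^ 2 - 1) ^ n = X ^ n * (X + C 2) ^ n := by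
    rw [← mul_pow, C_ofNat]; ring
  have hterm : ∀ j, (X + 1 : R[X]) ^ m * (X ^ n * (X ^ j * C 2 ^ (n - j) * (n.choose j : R[X])))
      = C ((n.choose j : R) * 2 ^ (n - j)) * (X ^ (n + j) * (X + 1) ^ m) := by
    intro j
    simp only [map_mul, map_pow, map_natCast]
    ring
  rw [hfactor, add_pow X (C 2), mul_sum, mul_sum]
  simp only [hterm, finsetSum_coeff, coeff_C_mul, coeff_X_pow_mul', coeff_X_add_one_pow]
  refine sum_congr rfl fun j _ => ?_
  rw [show (v : ℤ) - n - j = v - (n + j : ℕ) by push_cast; ring, chooseZ_natCast_sub]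
  split_ifs <;> push_cast <;> ring

theorem sum_neg_one_pow_mul_choose_mul_choose (m n v : ℕ) :
    ∑ k ∈ range (n + 1), (-1 : R) ^ (n + k) * n.choose k * (m + 2 * k).choose v
      = ∑ j ∈ range (n + 1), (n.choose j : R) * chooseZ m ((v : ℤ) - n - j) * 2 ^ (n - j) := by
  rw [← coeff_X_add_one_pow_mul_sq_sub_one_pow_eq_alternating_sum,
    coeff_X_add_one_pow_mul_sq_sub_one_pow_eq_sum]

end Coefficients

lemma factorial_div_factorial_mul_factorial_mul_factorial {K : Type*} [Field K] [CharZero K]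
    {n k : ℕ} (v : ℕ) (hk₀ : 1 ≤ k) (hkn : k ≤ n) :
    ((v + 2 * k - 1).factorial : K) / ((2 * k - 1).factorial * (n - k).factorial * k.factorial)
      = v.factorial / n.factorial * (n.choose k * (v + 2 * k - 1).choose v) := by
  have hv : (v + 2 * k - 1).choose v * v.factorial * (2 * k - 1).factorial
      = (v + 2 * k - 1).factorial := by
    rw [show v + 2 * k - 1 = (2 * k - 1) + v by omega, mul_right_comm,
      Nat.add_choose_mul_factorial_mul_factorial]
  have hn := Nat.choose_mul_factorial_mul_factorial hkn
  rw [← hv, ← hn]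
  push_cast
  have : (n.choose k : K) ≠ 0 := Nat.cast_ne_zero.mpr (Nat.choose_pos hkn).ne'
  have : ((2 * k - 1).factorial : K) ≠ 0 := Nat.cast_ne_zero.mpr (Nat.factorial_ne_zero _)
  field_simp

theorem alternating_sum_rewrite_general (v lam : ℕ) (hv : 1 ≤ v) :
    (∑ k ∈ Finset.Icc 1 lam,
        (-1 : ℝ) ^ (lam + k) * ((v + 2 * k - 1).factorial : ℝ) /
          (((2 * k - 1).factorial : ℝ) * ((lam - k).factorial : ℝ) * (k.factorial : ℝ))
      = ((v.factorial : ℝ) / (lam.factorial : ℝ)) *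
        ∑ k ∈ Finset.range (lam + 1),
          (lam.choose k : ℝ) * (chooseZ (v - 1) ((v : ℤ) - lam - k) : ℝ) *
            (2 : ℝ) ^ (lam - k))
    ∧ 0 ≤ ∑ k ∈ Finset.Icc 1 lam,
        (-1 : ℝ) ^ (lam + k) * ((v + 2 * k - 1).factorial : ℝ) /
          (((2 * k - 1).factorial : ℝ) * ((lam - k).factorial : ℝ) * (k.factorial : ℝ)) := by
  refine (fun heq ↦ ⟨heq, heq ▸ ?_⟩) ?_
  · rw [← sum_neg_one_pow_mul_choose_mul_choose, range_eq_Ico,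
      sum_eq_sum_Ico_succ_bot (by omega : 0 < lam + 1), zero_add, Ico_add_one_right_eq_Icc]
    have hzero : (v - 1 + 2 * 0).choose v = 0 := Nat.choose_eq_zero_of_lt (by omega)
    rw [hzero, Nat.cast_zero, mul_zero, zero_add, mul_sum]
    refine sum_congr rfl fun k hk => ?_
    obtain ⟨hk₀, hk⟩ := mem_Icc.mp hk
    rw [mul_div_assoc, factorial_div_factorial_mul_factorial_mul_factorial v hk₀ hk,
      show v - 1 + 2 * k = v + 2 * k - 1 by omega]
    ring
  · positivity

theorem alternating_sum_rewrite (v lam : ℕ) (hv : 1 ≤ v) (h1 : 1 ≤ lam) (h2 : lam ≤ v) :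
    (∑ k ∈ Finset.Icc 1 lam,
        (-1 : ℝ) ^ (lam + k) * ((v + 2 * k - 1).factorial : ℝ) /
          (((2 * k - 1).factorial : ℝ) * ((lam - k).factorial : ℝ) * (k.factorial : ℝ))
      = ((v.factorial : ℝ) / (lam.factorial : ℝ)) *
        ∑ k ∈ Finset.range (lam + 1),
          (lam.choose k : ℝ) * (chooseZ (v - 1) ((v : ℤ) - lam - k) : ℝ) *
            (2 : ℝ) ^ (lam - k))
    ∧ 0 ≤ ∑ k ∈ Finset.Icc 1 lam,
        (-1 : ℝ) ^ (lam + k) * ((v + 2 * k - 1).factorial : ℝ) /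
          (((2 * k - 1).factorial : ℝ) * ((lam - k).factorial : ℝ) * (k.factorial : ℝ)) :=
  alternating_sum_rewrite_general v lam hv
end

section
/- For every σ > 0 and every multi-index ν ≠ 0 with |ν| = v ≥ 1, the bound ∑_{λ=1}^{v} σ^λ ∑_{k=1}^{λ} (−1)^{λ+k}(v+2k−1)!/((2k−1)!(λ−k)!k!) ≤ v!·e^{v + σe² + σ − 1} holds. -/
/-!
Write `(v + 2k - 1)! = C(v + 2k - 1, v) · v! · (2k - 1)!` and bound the binomial coefficient by
`e^(v + 2k - 1)`. Dropping the signs, the `(2k - 1)!` cancels and the `(λ, k)` term is at most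
`v! e^(v-1) · (σe²)^k σ^(λ-k) / (k! (λ-k)!)`. Summing over `k` gives, by the binomial theorem, at
most `v! e^(v-1) (σe² + σ)^λ / λ!`, and summing over `λ` at most `v! e^(v-1) e^(σe² + σ)`.
-/

open Finset Real Nat

lemma Nat.choose_le_exp (n m : ℕ) : (n.choose m : ℝ) ≤ exp n :=
  calc (n.choose m : ℝ) ≤ 2 ^ n := by exact_mod_cast n.choose_le_two_pow m
    _ ≤ exp 1 ^ n := by gcongr; linarith [add_one_le_exp (1 : ℝ)]
    _ = exp n := exp_one_pow n

lemma Nat.factorial_add_le_exp (m n : ℕ) : ((m + n)! : ℝ) ≤ m ! * n ! * exp (m + n) :=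
  calc ((m + n)! : ℝ) = m ! * n ! * (m + n).choose n := by
        rw [← add_choose_mul_factorial_mul_factorial m n]; push_cast; ring
    _ ≤ m ! * n ! * exp ↑(m + n) := by gcongr; exact Nat.choose_le_exp _ _
    _ = m ! * n ! * exp (m + n) := by push_cast; rfl

lemma add_pow_div_factorial {K : Type*} [Field K] [CharZero K] (x y : K) (n : ℕ) :
    (x + y) ^ n / n ! = ∑ k ∈ range (n + 1), x ^ k * y ^ (n - k) / (k ! * (n - k)!) := by
  rw [add_pow, sum_div]
  refine sum_congr rfl fun k hk => ?_
  have : (n ! : K) ≠ 0 := Nat.cast_ne_zero.2 n.factorial_ne_zero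
  rw [Nat.cast_choose K (by simpa [Nat.lt_succ_iff] using hk)]
  field_simp

lemma signed_factorial_ratio_le {σ : ℝ} (hσ : 0 ≤ σ) (v : ℕ) {lam k : ℕ} (hk : 1 ≤ k)
    (hklam : k ≤ lam) :
    σ ^ lam * ((-1 : ℝ) ^ (lam + k) * ((v + 2 * k - 1)! : ℝ) /
        (((2 * k - 1)! : ℝ) * ((lam - k)! : ℝ) * (k ! : ℝ)))
      ≤ v ! * exp (v - 1) * ((σ * exp 1 ^ 2) ^ k * σ ^ (lam - k) / (k ! * (lam - k)!)) := by
  have hsign : (-1 : ℝ) ^ (lam + k) * (v + 2 * k - 1)! ≤ (v + 2 * k - 1)! := by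
    simpa [abs_mul, abs_neg_one_pow] using le_abs_self ((-1 : ℝ) ^ (lam + k) * (v + 2 * k - 1)!)
  have hfact : ((v + 2 * k - 1)! : ℝ) ≤ v ! * (2 * k - 1)! * (exp (v - 1) * (exp 1 ^ 2) ^ k) := by
    have hexp : exp (v - 1) * (exp 1 ^ 2) ^ k = exp ((v : ℝ) + (2 * k - 1 : ℕ)) := by
      rw [← pow_mul, exp_one_pow, ← exp_add]
      push_cast [show 1 ≤ 2 * k by omega]
      ring_nf
    rw [hexp, show v + 2 * k - 1 = v + (2 * k - 1) by omega]
    exact_mod_cast Nat.factorial_add_le_exp v (2 * k - 1)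
  have hpow : σ ^ lam = σ ^ k * σ ^ (lam - k) := by rw [← pow_add, Nat.add_sub_cancel' hklam]
  calc _ ≤ σ ^ lam * (((v + 2 * k - 1)! : ℝ) / ((2 * k - 1)! * (lam - k)! * k !)) := by gcongr
    _ ≤ σ ^ lam * (v ! * (2 * k - 1)! * (exp (v - 1) * (exp 1 ^ 2) ^ k) /
          ((2 * k - 1)! * (lam - k)! * k !)) := by gcongr
    _ = _ := by
      rw [hpow, mul_pow]
      field_simp

lemma pow_mul_sum_signed_factorial_ratio_le {σ : ℝ} (hσ : 0 ≤ σ) (v lam : ℕ) :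
    σ ^ lam * ∑ k ∈ Icc 1 lam, (-1 : ℝ) ^ (lam + k) * ((v + 2 * k - 1)! : ℝ) /
        (((2 * k - 1)! : ℝ) * ((lam - k)! : ℝ) * (k ! : ℝ))
      ≤ v ! * exp (v - 1) * ((σ * exp 1 ^ 2 + σ) ^ lam / lam !) := by
  rw [mul_sum, add_pow_div_factorial, mul_sum]
  calc _ ≤ ∑ k ∈ Icc 1 lam,
        v ! * exp (v - 1) * ((σ * exp 1 ^ 2) ^ k * σ ^ (lam - k) / (k ! * (lam - k)!)) :=
        sum_le_sum fun k hk => signed_factorial_ratio_le hσ v (mem_Icc.1 hk).1 (mem_Icc.1 hk).2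
    _ ≤ _ := by
      refine sum_le_sum_of_subset_of_nonneg (fun k hk => ?_) fun _ _ _ => by positivity
      simp only [mem_Icc, mem_range] at hk ⊢
      omega

theorem double_sum_exp_bound_general (σ : ℝ) (hσ : 0 < σ) (v : ℕ) :
    ∑ lam ∈ Finset.Icc 1 v, σ ^ lam *
        ∑ k ∈ Finset.Icc 1 lam,
          (-1 : ℝ) ^ (lam + k) * ((v + 2 * k - 1).factorial : ℝ) /
            (((2 * k - 1).factorial : ℝ) * ((lam - k).factorial : ℝ) * (k.factorial : ℝ))
      ≤ (v.factorial : ℝ) *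
        Real.exp ((v : ℝ) + σ * Real.exp 1 ^ 2 + σ - 1) := by
  set s := σ * exp 1 ^ 2 + σ
  have hs : 0 ≤ s := by positivity
  calc _ ≤ ∑ lam ∈ Icc 1 v, v ! * exp (v - 1) * (s ^ lam / lam !) :=
        sum_le_sum fun lam _ => pow_mul_sum_signed_factorial_ratio_le hσ.le v lam
    _ ≤ v ! * exp (v - 1) * ∑ lam ∈ range (v + 1), s ^ lam / lam ! := by
      rw [← mul_sum]
      gcongr
      intro n hn
      simp only [mem_Icc, mem_range] at hn ⊢
      omega
    _ ≤ v ! * exp (v - 1) * exp s := by gcongr; exact sum_le_exp_of_nonneg hs _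
    _ = _ := by rw [mul_assoc, ← exp_add]; congr 2; simp only [s]; ring

theorem double_sum_exp_bound (σ : ℝ) (hσ : 0 < σ) (v : ℕ) (hv : 1 ≤ v) :
    ∑ lam ∈ Finset.Icc 1 v, σ ^ lam *
        ∑ k ∈ Finset.Icc 1 lam,
          (-1 : ℝ) ^ (lam + k) * ((v + 2 * k - 1).factorial : ℝ) /
            (((2 * k - 1).factorial : ℝ) * ((lam - k).factorial : ℝ) * (k.factorial : ℝ))
      ≤ (v.factorial : ℝ) *
        Real.exp ((v : ℝ) + σ * Real.exp 1 ^ 2 + σ - 1) :=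
  double_sum_exp_bound_general σ hσ v
end

section
/- Let 0 < p < 1, k ≥ 2 an integer, and (ρ_j)_{j≥1} a nonincreasing nonnegative sequence in ℓ^p with all ρ_j < 1 for j large. Then ∑ over multi-indices ν supported on {j : j > s} with every nonzero entry ν_j ≥ 2 and 2 ≤ |ν| ≤ k, of ρ^ν, is bounded by −1 + ∏_{j>s} (1 + ρ_j² (1−ρ_j^{k−1})/(1−ρ_j)), which is O(s^{−2/p+1}) as s → ∞. -/
/-!
Expanding `∏_{s < j ≤ M} (1 + ∑_{n=2}^k ρ_j ^ n)` gives the sum of `ρ ^ ν` over all `ν` supported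
in `(s, M]` with entries in `{0} ∪ [2, k]`; every admissible multi-index with support in `(s, M]`
occurs there, and `ν = 0` contributes the `1` that is subtracted. For `ρ_j < 1` the factors are
the closed forms of these truncated geometric sums.

For the rate, write `a_j = ∑_{n=2}^k ρ_j ^ n ≤ k ρ_j ^ 2` (once `ρ_j ≤ 1`) and `A = ∑_{j > s} a_j`;
then `∏_{j > s} (1 + a_j) - 1 ≤ A e^A` and `∑_{j > s} ρ_j ^ 2 ≤ ρ_{s+1} ^ {2-p} ∑_j ρ_j ^ p`. Monotonicity gives `s ρ_{s+1} ^ p ≤ ∑_j ρ_j ^ p`,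
so `ρ_{s+1} ^ {2-p} = O(s ^ {-(2-p)/p})`.
-/

open Filter Asymptotics Finset Topology

theorem geom_sum_Icc_two_eq (k : ℕ) {x : ℝ} (hx : x ≠ 1) :
    ∑ n ∈ Icc 2 k, x ^ n = x ^ 2 * (1 - x ^ (k - 1)) / (1 - x) := by
  rw [eq_div_iff (sub_ne_zero.2 hx.symm), ← Ico_add_one_right_eq_Icc, sum_Ico_eq_sum_range,
    show k + 1 - 2 = k - 1 by omega]
  simp_rw [pow_add, ← mul_sum]
  rw [mul_assoc, geom_sum_mul_neg]

theorem sum_Icc_two_pow_le (k : ℕ) {x : ℝ} (hx0 : 0 ≤ x) (hx1 : x ≤ 1) :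
    ∑ n ∈ Icc 2 k, x ^ n ≤ k * x ^ 2 :=
  calc ∑ n ∈ Icc 2 k, x ^ n ≤ #(Icc 2 k) • x ^ 2 :=
        sum_le_card_nsmul _ _ _ fun n hn => pow_le_pow_of_le_one hx0 hx1 (mem_Icc.1 hn).1
    _ ≤ k * x ^ 2 := by
        rw [nsmul_eq_mul, Nat.card_Icc]
        gcongr
        exact_mod_cast show k + 1 - 2 ≤ k by omega

theorem Finset.sum_finsupp_prod {ι M : Type*} [CommSemiring M]
    (s : Finset ι) (t : ι → Finset ℕ) (g : ι → ℕ → M) (hg : ∀ i, g i 0 = 1) :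
    ∑ f ∈ s.finsupp t, f.prod g = ∏ i ∈ s, ∑ n ∈ t i, g i n := by
  classical
  rw [prod_sum, Finset.finsupp, sum_map]
  refine sum_congr (by congr!) fun f _ => ?_
  rw [Function.Embedding.coeFn_mk, Finsupp.prod_of_support_subset _
    (Finsupp.support_indicator_subset s f) _ fun i _ => hg i, ← prod_attach]
  exact prod_congr rfl fun i _ => by rw [Finsupp.indicator_of_mem]

namespace Real

theorem exp_sub_one_le_mul_exp (x : ℝ) : exp x - 1 ≤ x * exp x :=
  calc exp x - 1 = (1 - exp (-x)) * exp x := by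
        rw [sub_mul, exp_neg, inv_mul_cancel₀ (exp_ne_zero x), one_mul]
    _ ≤ x * exp x := by gcongr; linarith [one_sub_le_exp_neg x]

variable {ι : Type*} {a : ι → ℝ}

theorem prod_le_tprod_one_add (ha : ∀ i, 0 ≤ a i) (hs : Summable a) (t : Finset ι) :
    ∏ i ∈ t, (1 + a i) ≤ ∏' i, (1 + a i) :=
  ge_of_tendsto (Real.multipliable_one_add_of_summable hs).hasProd <|
    eventually_atTop.2 ⟨t, fun _ ht => prod_le_prod_of_subset_of_one_le ht
      (fun i _ => by linarith [ha i]) fun i _ _ => by linarith [ha i]⟩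

theorem tprod_one_add_le_exp_tsum (ha : ∀ i, 0 ≤ a i) (hs : Summable a) :
    ∏' i, (1 + a i) ≤ exp (∑' i, a i) :=
  le_of_tendsto' (Real.multipliable_one_add_of_summable hs).hasProd fun t =>
    (prod_one_add_le_exp_sum t ha).trans <| exp_le_exp.2 <| hs.sum_le_tsum t fun i _ => ha i

theorem isBigO_tprod_one_add_sub_one {α : Type*} {l : Filter α} {a : α → ι → ℝ} {f : α → ℝ}
    (ha : ∀ᶠ x in l, (∀ i, 0 ≤ a x i) ∧ Summable (a x))
    (hlim : Tendsto (fun x => ∑' i, a x i) l (𝓝 0))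
    (hO : (fun x => ∑' i, a x i) =O[l] f) :
    (fun x => -1 + ∏' i, (1 + a x i)) =O[l] f := by
  refine IsBigO.trans (IsBigO.of_bound (exp 1) ?_) hO
  filter_upwards [ha, hlim.eventually (ge_mem_nhds one_pos)] with x ⟨hnn, hs⟩ hle
  have hprod := prod_le_tprod_one_add hnn hs ∅
  rw [prod_empty] at hprod
  rw [norm_of_nonneg (by linarith), norm_of_nonneg (tsum_nonneg hnn)]
  calc -1 + ∏' i, (1 + a x i) ≤ exp (∑' i, a x i) - 1 := by
        linarith [tprod_one_add_le_exp_tsum hnn hs]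
    _ ≤ (∑' i, a x i) * exp (∑' i, a x i) := exp_sub_one_le_mul_exp _
    _ ≤ exp 1 * ∑' i, a x i := by
        rw [mul_comm]; gcongr; exact tsum_nonneg hnn

end Real

theorem Antitone.nat_mul_le_tsum {f : ℕ → ℝ} (hf : Antitone f) (hf0 : ∀ n, 0 ≤ f n)
    (hs : Summable f) (n : ℕ) : n * f n ≤ ∑' i, f i :=
  calc n * f n = ∑ _i ∈ range n, f n := by simp
    _ ≤ ∑ i ∈ range n, f i := sum_le_sum fun i hi => hf (mem_range.1 hi).le
    _ ≤ ∑' i, f i := hs.sum_le_tsum _ fun i _ => hf0 i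

theorem sq_le_rpow_mul_rpow {p x y : ℝ} (hp : p ≤ 2) (hy : 0 ≤ y) (hyx : y ≤ x) :
    y ^ 2 ≤ x ^ (2 - p) * y ^ p :=
  calc y ^ 2 = y ^ (2 - p) * y ^ p := by
        rw [← Real.rpow_add' hy (by norm_num), sub_add_cancel, Real.rpow_two]
    _ ≤ x ^ (2 - p) * y ^ p := by gcongr

section Tail

variable {ρ : ℕ → ℝ} {p : ℝ}

theorem summable_sq_shift (hρ : ∀ j, 0 ≤ ρ j) (hanti : Antitone ρ) (hp : p ≤ 2)
    (hsum : Summable fun j => ρ j ^ p) (m : ℕ) : Summable fun i => ρ (m + i) ^ 2 :=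
  .of_nonneg_of_le (fun _ => sq_nonneg _)
    (fun i => sq_le_rpow_mul_rpow hp (hρ _) (hanti (m.le_add_right i)))
    ((hsum.comp_injective (add_right_injective m)).mul_left _)

theorem tsum_sq_shift_le (hρ : ∀ j, 0 ≤ ρ j) (hanti : Antitone ρ) (hp : p ≤ 2)
    (hsum : Summable fun j => ρ j ^ p) (m : ℕ) :
    ∑' i, ρ (m + i) ^ 2 ≤ ρ m ^ (2 - p) * ∑' j, ρ j ^ p :=
  calc ∑' i, ρ (m + i) ^ 2 ≤ ∑' i, ρ m ^ (2 - p) * ρ (m + i) ^ p :=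
        (summable_sq_shift hρ hanti hp hsum m).tsum_le_tsum
          (fun i => sq_le_rpow_mul_rpow hp (hρ _) (hanti (m.le_add_right i)))
          ((hsum.comp_injective (add_right_injective m)).mul_left _)
    _ = ρ m ^ (2 - p) * ∑' i, ρ (m + i) ^ p := tsum_mul_left
    _ ≤ ρ m ^ (2 - p) * ∑' j, ρ j ^ p :=
        mul_le_mul_of_nonneg_left (tsum_comp_le_tsum_of_inj hsum
          (fun j => Real.rpow_nonneg (hρ j) p) (add_right_injective m)) (Real.rpow_nonneg (hρ m) _)

theorem summable_sum_Icc_two_pow_shift (hρ : ∀ j, 0 ≤ ρ j) (hanti : Antitone ρ) (hp : p ≤ 2)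
    (hsum : Summable fun j => ρ j ^ p) (k : ℕ) {m : ℕ} (hm : ρ m ≤ 1) :
    Summable fun i => ∑ n ∈ Icc 2 k, ρ (m + i) ^ n :=
  .of_nonneg_of_le (fun _ => sum_nonneg fun n _ => pow_nonneg (hρ _) n)
    (fun i => sum_Icc_two_pow_le k (hρ _) ((hanti (m.le_add_right i)).trans hm))
    ((summable_sq_shift hρ hanti hp hsum m).mul_left (k : ℝ))

theorem tsum_sum_Icc_two_pow_shift_le (hρ : ∀ j, 0 ≤ ρ j) (hanti : Antitone ρ) (hp : p ≤ 2)
    (hsum : Summable fun j => ρ j ^ p) (k : ℕ) {m : ℕ} (hm : ρ m ≤ 1) :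
    ∑' i, ∑ n ∈ Icc 2 k, ρ (m + i) ^ n ≤ k * ∑' i, ρ (m + i) ^ 2 := by
  rw [← tsum_mul_left]
  exact (summable_sum_Icc_two_pow_shift hρ hanti hp hsum k hm).tsum_le_tsum
    (fun i => sum_Icc_two_pow_le k (hρ _) ((hanti (m.le_add_right i)).trans hm))
    ((summable_sq_shift hρ hanti hp hsum m).mul_left (k : ℝ))

theorem tsum_sq_tail_le_rpow (hρ : ∀ j, 0 ≤ ρ j) (hanti : Antitone ρ) (hp0 : 0 < p)
    (hp2 : p ≤ 2) (hsum : Summable fun j => ρ j ^ p) {s : ℕ} (hs : 0 < s) :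
    ∑' i, ρ (s + 1 + i) ^ 2 ≤ (∑' j, ρ j ^ p) ^ (2 / p) * (s : ℝ) ^ (-2 / p + 1) := by
  set S := ∑' j, ρ j ^ p
  have hS : 0 ≤ S := tsum_nonneg fun j => Real.rpow_nonneg (hρ j) p
  have hs' : (0 : ℝ) < s := Nat.cast_pos.2 hs
  have hq : 0 ≤ 2 / p - 1 := by rw [sub_nonneg, le_div_iff₀ hp0]; linarith
  have hρs : ρ (s + 1) ^ p ≤ S / s := by
    have hanti_p : Antitone fun j => ρ j ^ p := fun i j hij =>
      Real.rpow_le_rpow (hρ j) (hanti hij) hp0.le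
    rw [le_div_iff₀ hs', mul_comm]
    calc (s : ℝ) * ρ (s + 1) ^ p ≤ (s + 1 : ℕ) * ρ (s + 1) ^ p := by
          gcongr
          · exact Real.rpow_nonneg (hρ _) p
          · exact_mod_cast s.le_succ
      _ ≤ S := hanti_p.nat_mul_le_tsum (fun j => Real.rpow_nonneg (hρ j) p) hsum _
  calc ∑' i, ρ (s + 1 + i) ^ 2 ≤ ρ (s + 1) ^ (2 - p) * S := tsum_sq_shift_le hρ hanti hp2 hsum _
    _ = (ρ (s + 1) ^ p) ^ (2 / p - 1) * S := by
        rw [← Real.rpow_mul (hρ _)]; congr 2; field_simp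
    _ ≤ (S / s) ^ (2 / p - 1) * S := by gcongr; exact Real.rpow_nonneg (hρ _) p
    _ = S ^ (2 / p) * (s : ℝ) ^ (-2 / p + 1) := by
        rw [Real.div_rpow hS hs'.le, div_eq_mul_inv, ← Real.rpow_neg hs'.le, mul_right_comm,
          ← Real.rpow_add_one' hS (by positivity)]
        ring_nf

end Tail

def tailMultiIndices (s k : ℕ) : Set (ℕ →₀ ℕ) :=
  {ν | (∀ j ≤ s, ν j = 0) ∧ (∀ j, ν j ≠ 1) ∧ 2 ≤ ν.sum (fun _ n => n) ∧ ν.sum (fun _ n => n) ≤ k}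

theorem mem_finsupp_erase_zero_of_mem_tailMultiIndices {s k : ℕ} {ν : ℕ →₀ ℕ}
    (hν : ν ∈ tailMultiIndices s k) {A : Finset ℕ} (hA : ν.support ⊆ A) :
    ν ∈ (A.finsupp fun _ => insert 0 (Icc 2 k)).erase 0 := by
  obtain ⟨-, hne1, htwo, hk⟩ := hν
  refine mem_erase.2 ⟨?_, mem_finsupp_iff.2 ⟨hA, fun j _ => ?_⟩⟩
  · rintro rfl
    simp at htwo
  · have hjk := (Finsupp.single_eval_le_sum ν (g := fun n => n) rfl (fun _ => Nat.zero_le _) j).trans hk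
    have hj1 := hne1 j
    rw [mem_insert, mem_Icc]
    omega

theorem tsum_tailMultiIndices_le {ρ : ℕ → ℝ} (hρ : ∀ j, 0 ≤ ρ j) (s k : ℕ)
    (hsum : Summable fun i => ∑ n ∈ Icc 2 k, ρ (s + 1 + i) ^ n) :
    ∑' ν : tailMultiIndices s k, ν.1.prod (fun j n => ρ j ^ n)
      ≤ -1 + ∏' i, (1 + ∑ n ∈ Icc 2 k, ρ (s + 1 + i) ^ n) := by
  have ha i : 0 ≤ ∑ n ∈ Icc 2 k, ρ (s + 1 + i) ^ n := sum_nonneg fun n _ => pow_nonneg (hρ _) n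
  have hone : 1 ≤ ∏' i, (1 + ∑ n ∈ Icc 2 k, ρ (s + 1 + i) ^ n) := by
    simpa using Real.prod_le_tprod_one_add ha hsum ∅
  refine tsum_le_of_sum_le' (by linarith) fun u => ?_
  set M := u.sup fun ν => ν.1.support.sup id
  have hsub : u.map (Function.Embedding.subtype _) ⊆
      ((Ioc s M).finsupp fun _ => insert 0 (Icc 2 k)).erase 0 := by
    intro ν hν
    obtain ⟨ν, hνu, rfl⟩ := mem_map.1 hν
    refine mem_finsupp_erase_zero_of_mem_tailMultiIndices ν.2 fun j hj => mem_Ioc.2 ⟨?_, ?_⟩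
    · by_contra! h
      exact Finsupp.mem_support_iff.1 hj (ν.2.1 j h)
    · exact (le_sup (f := id) hj).trans (le_sup (f := fun ν => ν.1.support.sup id) hνu)
  calc ∑ ν ∈ u, ν.1.prod (fun j n => ρ j ^ n)
      = ∑ ν ∈ u.map (Function.Embedding.subtype _), ν.prod (fun j n => ρ j ^ n) := by
        rw [sum_map]; rfl
    _ ≤ ∑ ν ∈ ((Ioc s M).finsupp fun _ => insert 0 (Icc 2 k)).erase 0,
          ν.prod (fun j n => ρ j ^ n) :=
        sum_le_sum_of_subset_of_nonneg hsub fun ν _ _ =>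
          prod_nonneg fun j _ => pow_nonneg (hρ j) _
    _ = ∏ j ∈ Ioc s M, (1 + ∑ n ∈ Icc 2 k, ρ j ^ n) - 1 := by
        rw [sum_erase_eq_sub (mem_finsupp_iff.2 ⟨by simp, by simp⟩),
          sum_finsupp_prod _ _ _ fun j => pow_zero (ρ j)]
        simp [sum_insert]
    _ = ∏ i ∈ range (M - s), (1 + ∑ n ∈ Icc 2 k, ρ (s + 1 + i) ^ n) - 1 := by
        rw [← Ico_add_one_add_one_eq_Ioc, prod_Ico_eq_prod_range, Nat.add_sub_add_right]
    _ ≤ -1 + ∏' i, (1 + ∑ n ∈ Icc 2 k, ρ (s + 1 + i) ^ n) := by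
        linarith [Real.prod_le_tprod_one_add ha hsum (range (M - s))]

theorem dimension_truncation_tail_bound_general (p : ℝ) (hp0 : 0 < p) (hp1 : p < 1)
    (k : ℕ)
    (ρ : ℕ → ℝ) (hnn : ∀ j, 0 ≤ ρ j) (hmono : ∀ i j, i ≤ j → ρ j ≤ ρ i)
    (hsum : Summable fun j => ρ j ^ p) (hlt : ∀ᶠ j in atTop, ρ j < 1) :
    (∀ᶠ s : ℕ in atTop,
      (∑' ν : {ν : ℕ →₀ ℕ // (∀ j ≤ s, ν j = 0) ∧ (∀ j, ν j ≠ 1) ∧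
            2 ≤ ν.sum (fun _ n => n) ∧ ν.sum (fun _ n => n) ≤ k},
          ν.1.prod fun j n => ρ j ^ n)
        ≤ -1 + ∏' j : ℕ,
            (1 + ρ (s + 1 + j) ^ 2 * (1 - ρ (s + 1 + j) ^ (k - 1)) / (1 - ρ (s + 1 + j))))
    ∧ (fun s : ℕ => -1 + ∏' j : ℕ,
          (1 + ρ (s + 1 + j) ^ 2 * (1 - ρ (s + 1 + j) ^ (k - 1)) / (1 - ρ (s + 1 + j))))
        =O[atTop] fun s : ℕ => (s : ℝ) ^ (-2 / p + 1) := by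
  obtain ⟨N, hN⟩ := eventually_atTop.1 hlt
  have hp2 : p ≤ 2 := by linarith
  have hρN : ∀ s ≥ N, ρ (s + 1) ≤ 1 := fun s hs => (hN _ (by omega)).le
  set a : ℕ → ℕ → ℝ := fun s i => ∑ n ∈ Icc 2 k, ρ (s + 1 + i) ^ n
  have ha_nonneg s i : 0 ≤ a s i := sum_nonneg fun n _ => pow_nonneg (hnn _) n
  have ha_sum : ∀ s ≥ N, Summable (a s) := fun s hs =>
    summable_sum_Icc_two_pow_shift hnn hmono hp2 hsum k (hρN s hs)
  have htprod : ∀ s ≥ N, ∏' i, (1 + ρ (s + 1 + i) ^ 2 * (1 - ρ (s + 1 + i) ^ (k - 1))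
      / (1 - ρ (s + 1 + i))) = ∏' i, (1 + a s i) := fun s hs =>
    tprod_congr fun i => by rw [← geom_sum_Icc_two_eq k (hN _ (by omega)).ne]
  have hO : (fun s => ∑' i, a s i) =O[atTop] fun s : ℕ => (s : ℝ) ^ (-2 / p + 1) := by
    refine IsBigO.of_bound (k * (∑' j, ρ j ^ p) ^ (2 / p)) ?_
    filter_upwards [eventually_ge_atTop N, eventually_gt_atTop 0] with s hsN hs
    rw [Real.norm_of_nonneg (tsum_nonneg (ha_nonneg s)),
      Real.norm_of_nonneg (Real.rpow_nonneg s.cast_nonneg _), mul_assoc]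
    exact (tsum_sum_Icc_two_pow_shift_le hnn hmono hp2 hsum k (hρN s hsN)).trans <|
      mul_le_mul_of_nonneg_left (tsum_sq_tail_le_rpow hnn hmono hp0 hp2 hsum hs) k.cast_nonneg
  have hlim : Tendsto (fun s => ∑' i, a s i) atTop (𝓝 0) := by
    refine hO.trans_tendsto ?_
    rw [show -2 / p + 1 = -(2 / p - 1) by ring]
    exact (tendsto_rpow_neg_atTop (by rw [sub_pos, lt_div_iff₀ hp0]; linarith)).comp
      tendsto_natCast_atTop_atTop
  refine ⟨?_, ?_⟩
  · filter_upwards [eventually_ge_atTop N] with s hs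
    rw [htprod s hs]
    exact tsum_tailMultiIndices_le hnn s k (ha_sum s hs)
  · refine (Real.isBigO_tprod_one_add_sub_one ?_ hlim hO).congr' ?_ EventuallyEq.rfl
    · filter_upwards [eventually_ge_atTop N] with s hs using ⟨ha_nonneg s, ha_sum s hs⟩
    · filter_upwards [eventually_ge_atTop N] with s hs
      rw [htprod s hs]

theorem dimension_truncation_tail_bound (p : ℝ) (hp0 : 0 < p) (hp1 : p < 1)
    (k : ℕ) (hk : 2 ≤ k)
    (ρ : ℕ → ℝ) (hnn : ∀ j, 0 ≤ ρ j) (hmono : ∀ i j, i ≤ j → ρ j ≤ ρ i)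
    (hsum : Summable fun j => ρ j ^ p) (hlt : ∀ᶠ j in atTop, ρ j < 1) :
    (∀ᶠ s : ℕ in atTop,
      (∑' ν : {ν : ℕ →₀ ℕ // (∀ j ≤ s, ν j = 0) ∧ (∀ j, ν j ≠ 1) ∧
            2 ≤ ν.sum (fun _ n => n) ∧ ν.sum (fun _ n => n) ≤ k},
          ν.1.prod fun j n => ρ j ^ n)
        ≤ -1 + ∏' j : ℕ,
            (1 + ρ (s + 1 + j) ^ 2 * (1 - ρ (s + 1 + j) ^ (k - 1)) / (1 - ρ (s + 1 + j))))
    ∧ (fun s : ℕ => -1 + ∏' j : ℕ,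
          (1 + ρ (s + 1 + j) ^ 2 * (1 - ρ (s + 1 + j) ^ (k - 1)) / (1 - ρ (s + 1 + j))))
        =O[atTop] fun s : ℕ => (s : ℝ) ^ (-2 / p + 1) :=
  dimension_truncation_tail_bound_general p hp0 hp1 k ρ hnn hmono hsum hlt
end

section
/- Let Z be a separable Banach space and suppose a family (A_ν)_{ν ∈ F} in Z and a sequence (b_j)_{j≥1} of nonnegative reals satisfy the recursion ‖A_ν‖ ≤ ∑_{j ∈ supp(ν)} ν_j b_j ‖A_{ν−e_j}‖ + C·c_ν for all ν, where c_ν = |ν|!·b^ν for ν ≠ 0 and c_0 arbitrary with ‖A_0‖ ≤ C·c_0. Then ‖A_ν‖ ≤ C·∑_{m ≤ ν} C(ν,m)·|m|!·b^m·c_{ν−m} for all ν. -/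
/-!
Let `S ν = ∑_{m ≤ ν} (ν choose m) |m|! b^m c (ν - m)`, so that the claim is `‖A ν‖ ≤ C S ν`.
Shifting `m ↦ m - e_j` and using `ν_j (ν - e_j choose m - e_j) = m_j (ν choose m)`,
`b_j b^(m - e_j) = b^m` and `∑_j m_j = |m|` shows that `S` solves the recursion with equality:
`S ν = ∑_j ν_j b_j S (ν - e_j) + c ν`. As the coefficients `ν_j b_j` are nonnegative, induction
along the well-founded order on multi-indices shows that the sub-solution `‖A ν‖` stays below the
solution `C S ν`.
-/

open Finset
open scoped Nat

namespace Finsupp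

variable {σ : Type*}

theorem single_one_le_iff {ν : σ →₀ ℕ} {j : σ} : single j 1 ≤ ν ↔ ν j ≠ 0 := by
  rw [single_le_iff, Nat.one_le_iff_ne_zero]

theorem tsub_single_one_lt {ν : σ →₀ ℕ} {j : σ} (hj : ν j ≠ 0) : ν - single j 1 < ν := by
  conv_rhs => rw [← tsub_add_cancel_of_le (single_one_le_iff.2 hj)]
  exact lt_add_of_pos_right _ (pos_iff_ne_zero.2 (single_ne_zero.2 one_ne_zero))

theorem degree_tsub_single_one_add_one {m : σ →₀ ℕ} {j : σ} (hj : m j ≠ 0) :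
    degree (m - single j 1) + 1 = degree m := by
  conv_rhs => rw [← tsub_add_cancel_of_le (single_one_le_iff.2 hj), map_add, degree_single]

theorem degree_eq_sum_of_le [DecidableEq σ] {m ν : σ →₀ ℕ} (h : m ≤ ν) :
    degree m = ∑ j ∈ ν.support, m j :=
  sum_of_support_subset m (support_mono h) (fun _ n => n) fun _ _ => rfl

theorem prod_pow_eq_mul_prod_pow_tsub_single {M : Type*} [CommMonoid M] (b : σ → M)
    {m : σ →₀ ℕ} {j : σ} (hj : m j ≠ 0) :
    (m.prod fun k n => b k ^ n) = b j * (m - single j 1).prod fun k n => b k ^ n := by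
  conv_lhs => rw [← tsub_add_cancel_of_le (single_one_le_iff.2 hj)]
  rw [prod_add_index' (fun _ => pow_zero _) (fun _ _ _ => pow_add _ _ _), mul_comm]
  simp

theorem prod_choose_of_support_subset {ν m : σ →₀ ℕ} (h : m ≤ ν) {s : Finset σ}
    (hs : ν.support ⊆ s) :
    ∏ k ∈ s, (ν k).choose (m k) = ∏ k ∈ ν.support, (ν k).choose (m k) := by
  refine (prod_subset hs fun k _ hk => ?_).symm
  have hνk : ν k = 0 := notMem_support_iff.1 hk
  have hmk : m k = 0 := by simpa [hνk] using h k
  rw [hνk, hmk, Nat.choose_self]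

theorem mul_prod_choose_tsub_single [DecidableEq σ] {ν m : σ →₀ ℕ} (h : m ≤ ν) {j : σ}
    (hj : m j ≠ 0) :
    ν j * ∏ k ∈ (ν - single j 1).support,
        ((ν - single j 1 : σ →₀ ℕ) k).choose ((m - single j 1 : σ →₀ ℕ) k)
      = m j * ∏ k ∈ ν.support, (ν k).choose (m k) := by
  have hjν : j ∈ ν.support := mem_support_iff.2 fun h0 => hj (Nat.le_zero.1 (h0 ▸ h j))
  rw [← prod_choose_of_support_subset (tsub_le_tsub_right h _) support_tsub,
    ← Finset.mul_prod_erase _ _ hjν, ← Finset.mul_prod_erase _ _ hjν,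
    Finset.prod_congr rfl fun k hk => by
      rw [tsub_apply, tsub_apply, single_eq_of_ne (ne_of_mem_erase hk), tsub_zero, tsub_zero]]
  obtain ⟨a, ha⟩ := Nat.exists_eq_add_one_of_ne_zero (mem_support_iff.1 hjν)
  obtain ⟨d, hd⟩ := Nat.exists_eq_add_one_of_ne_zero hj
  simp only [tsub_apply, single_eq_same, ha, hd, add_tsub_cancel_right, ← mul_assoc,
    Nat.add_one_mul_choose_eq]
  ring

theorem sum_Iic_eq_sum_Icc_tsub [DecidableEq σ] {M : Type*} [AddCommMonoid M] (μ e : σ →₀ ℕ)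
    (F : (σ →₀ ℕ) → M) : ∑ m ∈ Iic μ, F m = ∑ m ∈ Icc e (μ + e), F (m - e) := by
  rw [show Icc e (μ + e) = (Icc 0 μ).map (addRightEmbedding e) by simp, Finset.sum_map]
  simp only [addRightEmbedding_apply, add_tsub_cancel_right]
  rfl

section Majorant

variable {R : Type*} [CommSemiring R] (b : σ → R) (c : (σ →₀ ℕ) → R)

/-- The summand of `S ν` with the factorial `|m|!` replaced by `k!`; the identity for `S` goes
through the summands with `k = |m| - 1`. -/
noncomputable def majorantTerm (ν m : σ →₀ ℕ) (k : ℕ) : R :=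
  (∏ j ∈ ν.support, ((ν j).choose (m j) : R)) * (k ! : R) * (m.prod fun j n => b j ^ n) *
    c (ν - m)

theorem majorantTerm_succ (ν m : σ →₀ ℕ) (k : ℕ) :
    (k + 1) * majorantTerm b c ν m k = majorantTerm b c ν m (k + 1) := by
  simp only [majorantTerm, Nat.factorial_succ, Nat.cast_mul, Nat.cast_succ]
  ring

variable [DecidableEq σ]

noncomputable def majorant (ν : σ →₀ ℕ) : R :=
  ∑ m ∈ Iic ν, majorantTerm b c ν m (degree m)

theorem mul_majorantTerm_tsub_single {ν m : σ →₀ ℕ} (h : m ≤ ν) {j : σ} (hj : m j ≠ 0) (k : ℕ) :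
    ν j * b j * majorantTerm b c (ν - single j 1) (m - single j 1) k
      = m j * majorantTerm b c ν m k := by
  have hchoose := congrArg (Nat.cast : ℕ → R) (mul_prod_choose_tsub_single h hj)
  simp only [Nat.cast_mul, Nat.cast_prod] at hchoose
  rw [majorantTerm, majorantTerm, tsub_tsub_tsub_cancel_right (single_one_le_iff.2 hj),
    prod_pow_eq_mul_prod_pow_tsub_single b hj]
  set P' := ∏ k ∈ (ν - single j 1).support,
    (((ν - single j 1 : σ →₀ ℕ) k).choose ((m - single j 1 : σ →₀ ℕ) k) : R)
  set P := ∏ k ∈ ν.support, ((ν k).choose (m k) : R)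
  calc _ = ν j * P' * (b j * k ! * (m - single j 1).prod (fun k n => b k ^ n) * c (ν - m)) := by
        ring
    _ = m j * P * (b j * k ! * (m - single j 1).prod (fun k n => b k ^ n) * c (ν - m)) := by
        rw [hchoose]
    _ = _ := by ring

theorem mul_majorant_tsub_single {ν : σ →₀ ℕ} {j : σ} (hj : ν j ≠ 0) :
    ν j * b j * majorant b c (ν - single j 1)
      = ∑ m ∈ Iic ν, m j * majorantTerm b c ν m (degree m - 1) := by
  rw [majorant, sum_Iic_eq_sum_Icc_tsub _ (single j 1),
    tsub_add_cancel_of_le (single_one_le_iff.2 hj), Finset.mul_sum]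
  refine Finset.sum_subset_zero_on_sdiff Icc_subset_Iic_self (fun m hm => ?_) fun m hm => ?_
  · simp only [mem_sdiff, mem_Icc, mem_Iic, single_one_le_iff] at hm
    simp [show m j = 0 by tauto]
  · obtain ⟨hjm, hmν⟩ := mem_Icc.1 hm
    have hmj : m j ≠ 0 := single_one_le_iff.1 hjm
    have hdeg : degree (m - single j 1) = degree m - 1 := by
      have := degree_tsub_single_one_add_one hmj
      omega
    rw [hdeg, mul_majorantTerm_tsub_single b c hmν hmj]

theorem majorant_eq_sum_degree_mul_add (ν : σ →₀ ℕ) :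
    majorant b c ν = ∑ m ∈ Iic ν, degree m * majorantTerm b c ν m (degree m - 1) + c ν := by
  have hzero : majorantTerm b c ν 0 (degree (0 : σ →₀ ℕ)) = c ν := by simp [majorantTerm]
  have hsucc : ∀ m ∈ (Iic ν).erase 0, ((degree m : ℕ) : R) * majorantTerm b c ν m (degree m - 1)
      = majorantTerm b c ν m (degree m) := by
    intro m hm
    obtain ⟨k, hk⟩ :=
      Nat.exists_eq_add_one_of_ne_zero (mt (degree_eq_zero_iff _).1 (ne_of_mem_erase hm))
    rw [hk, Nat.add_sub_cancel, ← majorantTerm_succ, Nat.cast_succ]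
  rw [majorant, ← Finset.add_sum_erase _ _ (mem_Iic.2 zero_le),
    ← Finset.add_sum_erase _ _ (mem_Iic.2 zero_le), Finset.sum_congr rfl hsucc, hzero, map_zero,
    Nat.cast_zero, zero_mul, zero_add, add_comm]

theorem majorant_eq_sum_add (ν : σ →₀ ℕ) :
    majorant b c ν = ∑ j ∈ ν.support, ν j * b j * majorant b c (ν - single j 1) + c ν := by
  have hdegree : ∀ m ∈ Iic ν, ∑ j ∈ ν.support, (m j : R) = degree m := fun m hm => by
    rw [degree_eq_sum_of_le (mem_Iic.1 hm), Nat.cast_sum]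
  rw [Finset.sum_congr rfl fun j hj => mul_majorant_tsub_single b c (mem_support_iff.1 hj),
    Finset.sum_comm, majorant_eq_sum_degree_mul_add]
  congr 1
  exact Finset.sum_congr rfl fun m hm => by rw [← Finset.sum_mul, hdegree m hm]

end Majorant

theorem le_of_le_sum_tsub_single {R : Type*} [Semiring R] [PartialOrder R] [IsOrderedRing R]
    {a s d : (σ →₀ ℕ) → R} {w : (σ →₀ ℕ) → σ → R}
    (hw : ∀ ν j, 0 ≤ w ν j)
    (ha : ∀ ν, a ν ≤ ∑ j ∈ ν.support, w ν j * a (ν - single j 1) + d ν)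
    (hs : ∀ ν, s ν = ∑ j ∈ ν.support, w ν j * s (ν - single j 1) + d ν) (ν : σ →₀ ℕ) :
    a ν ≤ s ν := by
  induction ν using WellFoundedLT.induction with
  | _ ν ih =>
    rw [hs]
    refine (ha ν).trans ?_
    gcongr with j hj
    · exact hw ν j
    · exact ih _ (tsub_single_one_lt (mem_support_iff.1 hj))

end Finsupp

theorem abstract_recursion_lemma_general {Z : Type*} [NormedAddCommGroup Z]
    (b : ℕ → ℝ) (hb : ∀ j, 0 ≤ b j) (C : ℝ)
    (c : (ℕ →₀ ℕ) → ℝ) (A : (ℕ →₀ ℕ) → Z)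
    (hrec : ∀ ν : ℕ →₀ ℕ,
      ‖A ν‖ ≤ (∑ j ∈ ν.support, (ν j : ℝ) * b j * ‖A (ν - Finsupp.single j 1)‖) + C * c ν) :
    ∀ ν : ℕ →₀ ℕ, ‖A ν‖ ≤ C * ∑ m ∈ Finset.Iic ν,
      (∏ j ∈ ν.support, ((ν j).choose (m j) : ℝ)) *
        ((m.sum fun _ n => n).factorial : ℝ) * (m.prod fun j n => b j ^ n) * c (ν - m) :=
  Finsupp.le_of_le_sum_tsub_single (s := fun ν => C * Finsupp.majorant b c ν)
    (fun ν j => mul_nonneg (Nat.cast_nonneg _) (hb j)) hrec fun ν => by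
      rw [Finsupp.majorant_eq_sum_add, mul_add, Finset.mul_sum]
      congr 1
      exact Finset.sum_congr rfl fun j _ => by ring

theorem abstract_recursion_lemma {Z : Type*} [NormedAddCommGroup Z] [NormedSpace ℝ Z]
    [CompleteSpace Z] [TopologicalSpace.SeparableSpace Z]
    (b : ℕ → ℝ) (hb : ∀ j, 0 ≤ b j) (C : ℝ) (hC : 0 ≤ C)
    (c : (ℕ →₀ ℕ) → ℝ) (A : (ℕ →₀ ℕ) → Z)
    (hc : ∀ ν : ℕ →₀ ℕ, ν ≠ 0 →
      c ν = ((ν.sum fun _ n => n).factorial : ℝ) * ν.prod fun j n => b j ^ n)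
    (h0 : ‖A 0‖ ≤ C * c 0)
    (hrec : ∀ ν : ℕ →₀ ℕ,
      ‖A ν‖ ≤ (∑ j ∈ ν.support, (ν j : ℝ) * b j * ‖A (ν - Finsupp.single j 1)‖) + C * c ν) :
    ∀ ν : ℕ →₀ ℕ, ‖A ν‖ ≤ C * ∑ m ∈ Finset.Iic ν,
      (∏ j ∈ ν.support, ((ν j).choose (m j) : ℝ)) *
        ((m.sum fun _ n => n).factorial : ℝ) * (m.prod fun j n => b j ^ n) * c (ν - m) :=
  abstract_recursion_lemma_general b hb C c A hrec
end

section
/- Suppose a real-valued function Φ on [−1/2,1/2]^d is smooth and satisfies |∂^ν Φ(y)| ≤ σ·(|ν|+1)!·b^ν for all multi-indices ν and all y, where σ > 0 and b ∈ (0,∞)^d. Then |∂^ν exp(Φ(y))| ≤ e^{max(σ, σe²+2σ−1)} · |ν|! · (e·b)^ν for all ν and all y. -/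
/-- Partial derivative of `f` along the `j`-th coordinate direction. -/
noncomputable def pd {d : ℕ} {Z : Type*} [NormedAddCommGroup Z] [NormedSpace ℝ Z]
    (j : Fin d) (f : (Fin d → ℝ) → Z) : (Fin d → ℝ) → Z :=
  fun y => fderiv ℝ f y (Pi.single j 1)

/-- Mixed partial derivative `∂^ν = ∏_j (∂/∂y_j)^{ν_j}`. -/
noncomputable def pdm {d : ℕ} {Z : Type*} [NormedAddCommGroup Z] [NormedSpace ℝ Z]
    (ν : Fin d → ℕ) (f : (Fin d → ℝ) → Z) : (Fin d → ℝ) → Z :=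
  (List.finRange d).foldr (fun j g => (pd j)^[ν j] g) f

/-- The cube `[-1/2, 1/2]^d`. -/
def cube (d : ℕ) : Set (Fin d → ℝ) :=
  Set.univ.pi fun _ => Set.Icc (-(1/2) : ℝ) (1/2)

namespace ExpBd
open Finset
variable {d : ℕ}

lemma pd_smooth (j : Fin d) {f : (Fin d → ℝ) → ℝ} (hf : ContDiff ℝ (⊤ : ℕ∞) f) :
    ContDiff ℝ (⊤ : ℕ∞) (pd j f) :=
  (hf.fderiv_right (m := (⊤ : ℕ∞)) le_rfl).clm_apply contDiff_const

lemma pd_iter_smooth (j : Fin d) (n : ℕ) {f : (Fin d → ℝ) → ℝ} (hf : ContDiff ℝ (⊤ : ℕ∞) f) :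
    ContDiff ℝ (⊤ : ℕ∞) ((pd j)^[n] f) := by
  induction n generalizing f with
  | zero => exact hf
  | succ n ih => rw [Function.iterate_succ_apply']; exact pd_smooth j (ih hf)

noncomputable def pdl (l : List (Fin d)) (ν : Fin d → ℕ) (f : (Fin d → ℝ) → ℝ) :
    (Fin d → ℝ) → ℝ :=
  l.foldr (fun j g => (pd j)^[ν j] g) f

lemma pdm_eq_pdl (ν : Fin d → ℕ) (f : (Fin d → ℝ) → ℝ) :
    pdm ν f = pdl (List.finRange d) ν f := rfl

lemma pdl_smooth (l : List (Fin d)) (ν : Fin d → ℕ) {f : (Fin d → ℝ) → ℝ}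
    (hf : ContDiff ℝ (⊤ : ℕ∞) f) : ContDiff ℝ (⊤ : ℕ∞) (pdl l ν f) := by
  induction l with
  | nil => exact hf
  | cons a t ih => exact pd_iter_smooth a _ ih

lemma pdm_smooth (ν : Fin d → ℕ) {f : (Fin d → ℝ) → ℝ} (hf : ContDiff ℝ (⊤ : ℕ∞) f) :
    ContDiff ℝ (⊤ : ℕ∞) (pdm ν f) := pdl_smooth _ _ hf

lemma pd_mul (j : Fin d) {f g : (Fin d → ℝ) → ℝ} (hf : ContDiff ℝ (⊤ : ℕ∞) f) (hg : ContDiff ℝ (⊤ : ℕ∞) g) :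
    pd j (fun y => f y * g y) = fun y => pd j f y * g y + f y * pd j g y := by
  funext y
  have := fderiv_fun_mul (𝕜 := ℝ) (hf.differentiable (by simp) y) (hg.differentiable (by simp) y)
  simp only [pd, this]
  simp only [ContinuousLinearMap.add_apply, ContinuousLinearMap.smul_apply, smul_eq_mul]
  ring

lemma pd_exp (j : Fin d) {f : (Fin d → ℝ) → ℝ} (hf : ContDiff ℝ (⊤ : ℕ∞) f) :
    pd j (fun y => Real.exp (f y)) = fun y => pd j f y * Real.exp (f y) := by
  funext y
  simp only [pd, fderiv_exp (hf.differentiable (by simp) y)]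
  simp [mul_comm]

lemma pd_sum {ι : Type*} (j : Fin d) (s : Finset ι) (F : ι → (Fin d → ℝ) → ℝ)
    (hF : ∀ i ∈ s, ContDiff ℝ (⊤ : ℕ∞) (F i)) :
    pd j (fun y => ∑ i ∈ s, F i y) = fun y => ∑ i ∈ s, pd j (F i) y := by
  funext y
  simp only [pd]
  rw [fderiv_fun_sum (fun i hi => (hF i hi).differentiable (by simp) y)]
  simp

lemma pd_const_mul (j : Fin d) (c : ℝ) {f : (Fin d → ℝ) → ℝ} (hf : ContDiff ℝ (⊤ : ℕ∞) f) :
    pd j (fun y => c * f y) = fun y => c * pd j f y := by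
  funext y
  simp only [pd, fderiv_const_mul (hf.differentiable (by simp) y) c]
  simp


lemma pd_sum_const_mul {ι : Type*} (j : Fin d) (s : Finset ι) (c : ι → ℝ)
    (F : ι → (Fin d → ℝ) → ℝ) (hF : ∀ i ∈ s, ContDiff ℝ (⊤ : ℕ∞) (F i)) :
    pd j (fun y => ∑ i ∈ s, c i * F i y) = fun y => ∑ i ∈ s, c i * pd j (F i) y := by
  rw [pd_sum j s (fun i y => c i * F i y)
    (fun i hi => contDiff_const.mul (hF i hi))]
  funext y
  exact Finset.sum_congr rfl fun i hi => by
    rw [pd_const_mul j (c i) (hF i hi)]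

lemma iter_leibniz (j : Fin d) (n : ℕ) {f g : (Fin d → ℝ) → ℝ}
    (hf : ContDiff ℝ (⊤ : ℕ∞) f) (hg : ContDiff ℝ (⊤ : ℕ∞) g) :
    (pd j)^[n] (fun y => f y * g y) = fun y =>
      ∑ i ∈ Finset.range (n + 1),
        (n.choose i : ℝ) * ((pd j)^[i] f y * (pd j)^[n - i] g y) := by
  induction n with
  | zero => simp
  | succ n ih =>
    rw [Function.iterate_succ_apply', ih]
    rw [pd_sum_const_mul j _ _ (fun i y => (pd j)^[i] f y * (pd j)^[n-i] g y)
      (fun i _ => (pd_iter_smooth j i hf).mul (pd_iter_smooth j (n-i) hg))]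
    funext y
    have step : ∀ i ∈ Finset.range (n+1),
        (n.choose i : ℝ) * pd j (fun y => (pd j)^[i] f y * (pd j)^[n-i] g y) y
        = (n.choose i : ℝ) * ((pd j)^[i+1] f y * (pd j)^[n-i] g y)
          + (n.choose i : ℝ) * ((pd j)^[i] f y * (pd j)^[n+1-i] g y) := by
      intro i hi
      have hi' : i ≤ n := Finset.mem_range_succ_iff.mp hi
      rw [pd_mul j (pd_iter_smooth j i hf) (pd_iter_smooth j (n-i) hg)]
      have h1 : pd j ((pd j)^[i] f) = (pd j)^[i+1] f :=
        (Function.iterate_succ_apply' (pd j) i f).symm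
      have h2 : pd j ((pd j)^[n-i] g) = (pd j)^[n+1-i] g := by
        have : n + 1 - i = (n - i) + 1 := by omega
        rw [this, Function.iterate_succ_apply']
      simp only [h1, h2]
      ring
    rw [Finset.sum_congr rfl step, Finset.sum_add_distrib]
    -- RHS: peel first term
    rw [Finset.sum_range_succ' (fun i => ((n+1).choose i : ℝ) *
      ((pd j)^[i] f y * (pd j)^[n+1-i] g y)) (n+1)]
    have pascal : ∀ i ∈ Finset.range (n+1),
        (((n+1).choose (i+1) : ℝ)) * ((pd j)^[i+1] f y * (pd j)^[n+1-(i+1)] g y)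
        = (n.choose i : ℝ) * ((pd j)^[i+1] f y * (pd j)^[n-i] g y)
          + (n.choose (i+1) : ℝ) * ((pd j)^[i+1] f y * (pd j)^[n-i] g y) := by
      intro i hi
      have : (n+1).choose (i+1) = n.choose i + n.choose (i+1) := Nat.choose_succ_succ' n i
      have hni : n + 1 - (i+1) = n - i := by omega
      rw [this, hni]
      push_cast
      ring
    rw [Finset.sum_congr rfl pascal, Finset.sum_add_distrib]
    -- second LHS sum: Σ_{i∈range(n+1)} C(n,i) u_i v_{n+1-i}
    -- = Σ_{i∈range n} C(n,i+1) u_{i+1} v_{n-i} + u_0 v_{n+1}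
    rw [Finset.sum_range_succ' (fun i => (n.choose i : ℝ) *
      ((pd j)^[i] f y * (pd j)^[n+1-i] g y)) n]
    -- RHS second sum: Σ_{i∈range(n+1)} C(n,i+1) u_{i+1} v_{n-i}
    -- = Σ_{i∈range n} ... + C(n,n+1)(=0) u_{n+1} v_0
    rw [Finset.sum_range_succ (fun i => (n.choose (i+1) : ℝ) *
      ((pd j)^[i+1] f y * (pd j)^[n-i] g y)) n]
    have hz : (n.choose (n+1) : ℝ) = 0 := by
      rw [Nat.choose_succ_self]; norm_num
    have he : ∀ i, n + 1 - (i + 1) = n - i := fun i => by omega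
    simp only [hz, he, Nat.choose_zero_right, Nat.choose_succ_self_right, Nat.sub_zero,
      Nat.sub_self, Nat.cast_one, Nat.cast_zero, zero_mul, add_zero, Function.iterate_zero_apply]
    ring

lemma pdl_cons (a : Fin d) (t : List (Fin d)) (ν : Fin d → ℕ) (f : (Fin d → ℝ) → ℝ) :
    pdl (a :: t) ν f = (pd a)^[ν a] (pdl t ν f) := rfl

lemma pdl_congr (l : List (Fin d)) {ν ν' : Fin d → ℕ} (f : (Fin d → ℝ) → ℝ)
    (h : ∀ i ∈ l, ν i = ν' i) : pdl l ν f = pdl l ν' f := by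
  induction l with
  | nil => rfl
  | cons a t ih =>
    rw [pdl_cons, pdl_cons, ih (fun i hi => h i (List.mem_cons_of_mem a hi)),
      h a List.mem_cons_self]

lemma pdl_zero (l : List (Fin d)) {ν : Fin d → ℕ} (f : (Fin d → ℝ) → ℝ)
    (h : ∀ i ∈ l, ν i = 0) : pdl l ν f = f := by
  induction l with
  | nil => rfl
  | cons a t ih =>
    rw [pdl_cons, h a List.mem_cons_self]
    exact ih fun i hi => h i (List.mem_cons_of_mem a hi)

lemma pd_iter_sum_const_mul {ι : Type*} (j : Fin d) (n : ℕ) (s : Finset ι) (c : ι → ℝ)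
    (F : ι → (Fin d → ℝ) → ℝ) (hF : ∀ i ∈ s, ContDiff ℝ (⊤ : ℕ∞) (F i)) :
    (pd j)^[n] (fun y => ∑ i ∈ s, c i * F i y)
      = fun y => ∑ i ∈ s, c i * (pd j)^[n] (F i) y := by
  induction n with
  | zero => rfl
  | succ n ih =>
    rw [Function.iterate_succ_apply', ih,
      pd_sum_const_mul j s c (fun i => (pd j)^[n] (F i))
        (fun i hi => pd_iter_smooth j n (hF i hi))]
    funext y
    refine Finset.sum_congr rfl fun i _ => ?_
    rw [← Function.iterate_succ_apply' (pd j) n (F i)]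

/-- index set for the multi-index Leibniz sum over coordinates in `l` -/
noncomputable def msum (l : List (Fin d)) (ν : Fin d → ℕ) : Finset (Fin d → ℕ) :=
  Fintype.piFinset fun i => if i ∈ l then Finset.Iic (ν i) else {0}

lemma mem_msum {l : List (Fin d)} {ν κ : Fin d → ℕ} :
    κ ∈ msum l ν ↔ ∀ i, (i ∈ l → κ i ≤ ν i) ∧ (i ∉ l → κ i = 0) := by
  simp only [msum, Fintype.mem_piFinset]
  constructor
  · intro h i
    have := h i
    split_ifs at this with hi
    · exact ⟨fun _ => Finset.mem_Iic.mp this, fun h' => absurd hi h'⟩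
    · exact ⟨fun h' => absurd h' hi, fun _ => Finset.mem_singleton.mp this⟩
  · intro h i
    split_ifs with hi
    · exact Finset.mem_Iic.mpr ((h i).1 hi)
    · exact Finset.mem_singleton.mpr ((h i).2 hi)

lemma pdl_leibniz : ∀ (l : List (Fin d)), l.Nodup → ∀ (ν : Fin d → ℕ)
    {f g : (Fin d → ℝ) → ℝ}, ContDiff ℝ (⊤ : ℕ∞) f → ContDiff ℝ (⊤ : ℕ∞) g →
    pdl l ν (fun y => f y * g y) = fun y => ∑ κ ∈ msum l ν,
      (∏ i ∈ l.toFinset, ((ν i).choose (κ i) : ℝ)) *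
        (pdl l κ f y * pdl l (fun i => ν i - κ i) g y) := by
  intro l
  induction l with
  | nil =>
    intro _ ν f g hf hg
    have hs : msum ([] : List (Fin d)) ν = {fun _ => 0} := by
      ext κ
      simp [mem_msum, funext_iff]
    rw [hs]
    funext y
    simp [pdl]
  | cons a t ih =>
    intro hnd ν f g hf hg
    have hat : a ∉ t := (List.nodup_cons.mp hnd).1
    have ht : t.Nodup := (List.nodup_cons.mp hnd).2
    rw [pdl_cons, ih ht ν hf hg]
    rw [pd_iter_sum_const_mul a (ν a) (msum t ν) _
      (fun κ y => pdl t κ f y * pdl t (fun i => ν i - κ i) g y)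
      (fun κ _ => (pdl_smooth t κ hf).mul (pdl_smooth t _ hg))]
    funext y
    -- expand inner iterate with 1-D Leibniz
    have inner : ∀ κ ∈ msum t ν,
        (∏ i ∈ t.toFinset, ((ν i).choose (κ i) : ℝ)) *
          (pd a)^[ν a] (fun y => pdl t κ f y * pdl t (fun i => ν i - κ i) g y) y
        = ∑ i ∈ Finset.Iic (ν a),
            (∏ i ∈ t.toFinset, ((ν i).choose (κ i) : ℝ)) * (((ν a).choose i : ℝ) *
              ((pd a)^[i] (pdl t κ f) y * (pd a)^[ν a - i] (pdl t (fun i => ν i - κ i) g) y)) := by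
      intro κ _
      rw [iter_leibniz a (ν a) (pdl_smooth t κ hf) (pdl_smooth t _ hg)]
      have hr : Finset.range (ν a + 1) = Finset.Iic (ν a) := by
        ext x; simp [Nat.lt_succ_iff]
      rw [hr, Finset.mul_sum]
    rw [Finset.sum_congr rfl inner, ← Finset.sum_product']
    -- now the reindexing bijection
    refine Finset.sum_nbij' (fun p => Function.update p.1 a p.2)
      (fun κ => (Function.update κ a 0, κ a)) ?_ ?_ ?_ ?_ ?_
    · rintro ⟨κ, i⟩ hp
      rw [Finset.mem_product] at hp
      obtain ⟨hκ, hi⟩ := hp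
      rw [mem_msum] at hκ
      rw [mem_msum]
      intro x
      dsimp only
      by_cases hx : x = a
      · subst hx
        rw [Function.update_self]
        exact ⟨fun _ => Finset.mem_Iic.mp hi, fun hc => absurd (List.mem_cons_self (a := x) (l := t)) hc⟩
      · rw [Function.update_of_ne hx]
        refine ⟨fun hxl => (hκ x).1 ?_, fun hxl => (hκ x).2 ?_⟩
        · rcases List.mem_cons.mp hxl with h | h
          · exact absurd h hx
          · exact h
        · exact fun h => hxl (List.mem_cons_of_mem a h)
    · intro κ hκ
      rw [mem_msum] at hκ
      rw [Finset.mem_product]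
      refine ⟨?_, Finset.mem_Iic.mpr ((hκ a).1 List.mem_cons_self)⟩
      rw [mem_msum]
      intro x
      dsimp only
      by_cases hx : x = a
      · subst hx; simp [hat]
      · rw [Function.update_of_ne hx]
        refine ⟨fun hxl => (hκ x).1 (List.mem_cons_of_mem a hxl),
          fun hxl => (hκ x).2 ?_⟩
        intro h
        rcases List.mem_cons.mp h with h | h
        · exact hx h
        · exact hxl h
    · rintro ⟨κ, i⟩ hp
      rw [Finset.mem_product, mem_msum] at hp
      have : κ a = 0 := (hp.1 a).2 (fun h => hat h)
      simp only [Function.update_self, Function.update_idem]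
      rw [Prod.mk.injEq]
      refine ⟨?_, rfl⟩
      funext x
      rcases eq_or_ne x a with rfl | hx
      · rw [Function.update_self, this]
      · rw [Function.update_of_ne hx]
    · intro κ hκ
      simp only [Function.update_idem, Function.update_eq_self]
    · rintro ⟨κ, i⟩ hp
      rw [Finset.mem_product, mem_msum] at hp
      obtain ⟨hκ, hi⟩ := hp
      -- value equality
      have hcoef : (∏ x ∈ (a :: t).toFinset, ((ν x).choose (Function.update κ a i x) : ℝ))
          = ((ν a).choose i : ℝ) * ∏ x ∈ t.toFinset, ((ν x).choose (κ x) : ℝ) := by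
        rw [List.toFinset_cons, Finset.prod_insert (by simpa using hat)]
        rw [Function.update_self]
        congr 1
        refine Finset.prod_congr rfl fun x hx => ?_
        have hx' : x ≠ a := by
          rintro rfl
          exact hat (List.mem_toFinset.mp hx)
        rw [Function.update_of_ne hx']
      have hf' : pdl (a :: t) (Function.update κ a i) f = (pd a)^[i] (pdl t κ f) := by
        rw [pdl_cons,
          pdl_congr t f (ν := Function.update κ a i) (ν' := κ) (fun x hx =>
            Function.update_of_ne (fun h => hat (by rw [← h]; exact hx)) _ _)]
        simp only [Function.update_self]
      have hg' : pdl (a :: t) (fun x => ν x - Function.update κ a i x) g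
          = (pd a)^[ν a - i] (pdl t (fun x => ν x - κ x) g) := by
        rw [pdl_cons,
          pdl_congr t g (ν := fun x => ν x - Function.update κ a i x)
            (ν' := fun x => ν x - κ x) (fun x hx => by
              rw [Function.update_of_ne (fun h => hat (by rw [← h]; exact hx))])]
        simp only [Function.update_self]
      dsimp only
      rw [hcoef, hf', hg']
      ring

lemma pdl_peel : ∀ (l : List (Fin d)), l.Pairwise (· < ·) → ∀ (ν : Fin d → ℕ) (j : Fin d)
    (f : (Fin d → ℝ) → ℝ), j ∈ l → 0 < ν j → (∀ i ∈ l, j < i → ν i = 0) →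
    pdl l ν f = pdl l (Function.update ν j (ν j - 1)) (pd j f) := by
  intro l
  induction l with
  | nil => intro _ _ j _ hj; exact absurd hj List.not_mem_nil
  | cons a t ih =>
    intro hs ν j f hj hpos hcend
    have hts : t.Pairwise (· < ·) := hs.of_cons
    have hlt : ∀ i ∈ t, a < i := fun i hi => List.rel_of_pairwise_cons hs hi
    rcases List.mem_cons.mp hj with rfl | hjt
    · -- a = j
      have hzero : ∀ i ∈ t, ν i = 0 := fun i hi => hcend i (List.mem_cons_of_mem j hi) (hlt i hi)
      rw [pdl_cons, pdl_cons, pdl_zero t f hzero,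
        pdl_zero t (pd j f) (fun i hi => by
          rw [Function.update_of_ne (fun h => absurd (hlt i hi) (by rw [h]; exact lt_irrefl j))]
          exact hzero i hi)]
      rw [Function.update_self]
      conv_lhs => rw [(by omega : ν j = (ν j - 1) + 1)]
      rw [Function.iterate_succ_apply]
    · -- j ∈ t, a ≠ j
      have haj : a ≠ j := fun h => absurd (h ▸ hlt j hjt) (lt_irrefl _)
      rw [pdl_cons, pdl_cons, ih hts ν j f hjt hpos
        (fun i hi hji => hcend i (List.mem_cons_of_mem a hi) hji),
        Function.update_of_ne haj]

lemma pdm_peel (ν : Fin d → ℕ) (j : Fin d) (f : (Fin d → ℝ) → ℝ)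
    (hpos : 0 < ν j) (hafter : ∀ i, j < i → ν i = 0) :
    pdm ν f = pdm (Function.update ν j (ν j - 1)) (pd j f) := by
  exact pdl_peel (List.finRange d) (List.pairwise_lt_finRange d) ν j f
    (List.mem_finRange j) hpos (fun i _ h => hafter i h)

-- Vandermonde
open Polynomial in
lemma vandermonde_pi (μ : Fin d → ℕ) (k : ℕ) :
    ∑ κ ∈ (Fintype.piFinset fun i => Finset.Iic (μ i)).filter
        (fun κ => ∑ i, κ i = k), ∏ i, (μ i).choose (κ i)
      = (∑ i, μ i).choose k := by
  classical
  have hco : ∀ n : ℕ, ((X : ℕ[X]) + 1) ^ n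
      = ∑ m ∈ Finset.Iic n, C (n.choose m) * X ^ m := by
    intro n
    rw [add_pow]
    rw [show Finset.range (n+1) = Finset.Iic n from by ext x; simp [Nat.lt_succ_iff]]
    refine Finset.sum_congr rfl fun m _ => ?_
    rw [one_pow, mul_one, mul_comm]
    norm_cast
  have key : ((X : ℕ[X]) + 1) ^ (∑ i, μ i)
      = ∑ κ ∈ Fintype.piFinset fun i => Finset.Iic (μ i),
          C (∏ i, (μ i).choose (κ i)) * X ^ (∑ i, κ i) := by
    rw [← Finset.prod_pow_eq_pow_sum]
    calc (∏ i, ((X : ℕ[X]) + 1) ^ (μ i))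
        = ∏ i, ∑ m ∈ Finset.Iic (μ i), C ((μ i).choose m) * X ^ m :=
          Finset.prod_congr rfl fun i _ => hco (μ i)
      _ = ∑ κ ∈ Fintype.piFinset fun i => Finset.Iic (μ i),
            ∏ i, C ((μ i).choose (κ i)) * X ^ (κ i) := Finset.prod_univ_sum _ _
      _ = ∑ κ ∈ Fintype.piFinset fun i => Finset.Iic (μ i),
            C (∏ i, (μ i).choose (κ i)) * X ^ (∑ i, κ i) := by
          refine Finset.sum_congr rfl fun κ _ => ?_
          rw [Finset.prod_mul_distrib, map_prod, Finset.prod_pow_eq_pow_sum]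
  have h2 := congrArg (fun p => p.coeff k) key
  simp only [Polynomial.coeff_X_add_one_pow, Polynomial.finset_sum_coeff,
    Polynomial.coeff_C_mul, Polynomial.coeff_X_pow, Nat.cast_id] at h2
  rw [Finset.sum_filter, h2]
  refine Finset.sum_congr rfl fun κ _ => ?_
  by_cases h : (∑ i, κ i) = k
  · simp [h]
  · simp [h, Ne.symm h]

lemma sum_kk_le {t : ℝ} (h0 : 0 ≤ t) (h1 : t < 1) (n : ℕ) :
    ∑ k ∈ range n, ((k : ℝ) + 1) * ((k : ℝ) + 2) * t ^ k ≤ 2 / (1 - t) ^ 3 := by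
  have h1' : (0 : ℝ) < 1 - t := by linarith
  have hA : ∀ m : ℕ, (∑ k ∈ range m, t ^ k) * (1 - t) = 1 - t ^ m := by
    intro m
    induction m with
    | zero => simp
    | succ m ih => rw [sum_range_succ, add_mul, ih, pow_succ]; ring
  have hB : ∀ m : ℕ, (∑ k ∈ range m, ((k : ℝ) + 1) * t ^ k) * (1 - t)
      = (∑ k ∈ range m, t ^ k) - (m : ℝ) * t ^ m := by
    intro m
    induction m with
    | zero => simp
    | succ m ih =>
      rw [sum_range_succ, add_mul, ih, sum_range_succ]
      push_cast
      rw [pow_succ]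
      ring
  have hC : ∀ m : ℕ, (∑ k ∈ range m, ((k : ℝ) + 1) * ((k : ℝ) + 2) * t ^ k) * (1 - t)
      = 2 * (∑ k ∈ range m, ((k : ℝ) + 1) * t ^ k) - (m : ℝ) * ((m : ℝ) + 1) * t ^ m := by
    intro m
    induction m with
    | zero => simp
    | succ m ih =>
      rw [sum_range_succ, add_mul, ih, sum_range_succ]
      push_cast
      rw [pow_succ]
      ring
  have hSA : (0:ℝ) ≤ ∑ k ∈ range n, t ^ k := sum_nonneg fun k _ => pow_nonneg h0 k
  have hSB : (0:ℝ) ≤ ∑ k ∈ range n, ((k : ℝ) + 1) * t ^ k :=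
    sum_nonneg fun k _ => mul_nonneg (by positivity) (pow_nonneg h0 k)
  have hSC : (0:ℝ) ≤ ∑ k ∈ range n, ((k : ℝ) + 1) * ((k : ℝ) + 2) * t ^ k :=
    sum_nonneg fun k _ => mul_nonneg (by positivity) (pow_nonneg h0 k)
  have htn : (0:ℝ) ≤ t ^ n := pow_nonneg h0 n
  have c1 : (∑ k ∈ range n, ((k : ℝ) + 1) * ((k : ℝ) + 2) * t ^ k) * (1 - t)
      ≤ 2 * (∑ k ∈ range n, ((k : ℝ) + 1) * t ^ k) := by
    rw [hC n]
    nlinarith [mul_nonneg (mul_nonneg (Nat.cast_nonneg n : (0:ℝ) ≤ n) (by positivity : (0:ℝ) ≤ (n:ℝ)+1)) htn]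
  have c2 : (∑ k ∈ range n, ((k : ℝ) + 1) * t ^ k) * (1 - t) ≤ ∑ k ∈ range n, t ^ k := by
    rw [hB n]
    nlinarith [mul_nonneg (Nat.cast_nonneg n : (0:ℝ) ≤ n) htn]
  have c3 : (∑ k ∈ range n, t ^ k) * (1 - t) ≤ 1 := by
    rw [hA n]; nlinarith
  rw [le_div_iff₀ (by positivity)]
  calc (∑ k ∈ range n, ((k : ℝ) + 1) * ((k : ℝ) + 2) * t ^ k) * (1 - t) ^ 3
      = ((∑ k ∈ range n, ((k : ℝ) + 1) * ((k : ℝ) + 2) * t ^ k) * (1 - t)) * (1 - t) ^ 2 := by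
        ring
    _ ≤ (2 * (∑ k ∈ range n, ((k : ℝ) + 1) * t ^ k)) * (1 - t) ^ 2 :=
        mul_le_mul_of_nonneg_right c1 (by positivity)
    _ = 2 * (((∑ k ∈ range n, ((k : ℝ) + 1) * t ^ k)) * (1 - t)) * (1 - t) := by ring
    _ ≤ 2 * ((∑ k ∈ range n, t ^ k)) * (1 - t) := by
        have := mul_le_mul_of_nonneg_right c2 (le_of_lt h1')
        nlinarith
    _ = 2 * ((∑ k ∈ range n, t ^ k) * (1 - t)) := by ring
    _ ≤ 2 := by nlinarith

lemma partial_exp_ratio {x : ℝ} (hx : 0 ≤ x) (N : ℕ) :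
    x * ∑ r ∈ range (N + 1), x ^ r / r.factorial
      ≤ ((N : ℝ) + 1) * ∑ r ∈ range (N + 2), x ^ r / r.factorial := by
  calc x * ∑ r ∈ range (N + 1), x ^ r / r.factorial
      = ∑ r ∈ range (N + 1), x ^ (r + 1) / r.factorial := by
        rw [mul_sum]
        exact sum_congr rfl fun r _ => by rw [pow_succ]; ring
    _ ≤ ∑ r ∈ range (N + 1), ((N : ℝ) + 1) * (x ^ (r + 1) / (r + 1).factorial) := by
        refine sum_le_sum fun r hr => ?_
        have hr' : r ≤ N := mem_range_succ_iff.mp hr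
        have hfs : ((r + 1).factorial : ℝ) = ((r : ℝ) + 1) * r.factorial := by
          rw [Nat.factorial_succ]; push_cast; ring
        have hf : (0:ℝ) < r.factorial := by positivity
        rw [hfs]
        have heq : x ^ (r+1) / (r.factorial:ℝ)
            = ((r:ℝ)+1) * (x^(r+1) / (((r:ℝ)+1)*(r.factorial:ℝ))) := by
          field_simp
        rw [heq]
        exact mul_le_mul_of_nonneg_right (by exact_mod_cast by linarith : ((r:ℝ)+1) ≤ (N:ℝ)+1)
          (by positivity)
    _ = ((N : ℝ) + 1) * ∑ r ∈ range (N + 1), x ^ (r + 1) / (r + 1).factorial := by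
        rw [mul_sum]
    _ ≤ ((N : ℝ) + 1) * ∑ r ∈ range (N + 2), x ^ r / r.factorial := by
        refine mul_le_mul_of_nonneg_left ?_ (by positivity)
        rw [Finset.sum_range_succ' (fun r => x ^ r / (r.factorial : ℝ)) (N+1)]
        simp only [Nat.factorial_zero, pow_zero, Nat.cast_one]
        nlinarith [sum_nonneg (fun r (_ : r ∈ range (N+1)) => by positivity : ∀ r ∈ range (N+1), (0:ℝ) ≤ x ^ (r+1) / ((r+1).factorial : ℝ))]


noncomputable def Ee : ℝ := Real.exp 1
noncomputable def qq : ℝ := 2 * Ee ^ 3 / (Ee - 1) ^ 3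

lemma hE_gt : (2.7182818283 : ℝ) < Ee := Real.exp_one_gt_d9
lemma hE_lt : Ee < (2.7182818286 : ℝ) := Real.exp_one_lt_d9
lemma hE_pos : (0:ℝ) < Ee := Real.exp_pos 1
lemma hE1_pos : (0:ℝ) < Ee - 1 := by have := hE_gt; linarith
lemma hq_pos : (0:ℝ) < qq := by
  have h1 := hE_pos; have h2 := hE1_pos
  unfold qq; positivity

lemma q_eq : 2 / (1 - Ee⁻¹) ^ 3 = qq := by
  have h0 : Ee ≠ 0 := ne_of_gt hE_pos
  have h1 : (Ee - 1) ≠ 0 := ne_of_gt hE1_pos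
  rw [qq]
  rw [show (1 - Ee⁻¹) = (Ee - 1) / Ee by field_simp]
  rw [div_pow]
  rw [div_div_eq_mul_div]

lemma num_key : 4 * Ee ^ 2 ≤ (Ee - 1) ^ 3 * (Ee ^ 2 + 1) := by
  have h1 := hE_gt; have h2 := hE_lt
  have c3 : (1.71 : ℝ)^3 < (Ee - 1)^3 := by
    apply pow_lt_pow_left₀ (by linarith) (by norm_num)
    norm_num
  have c3' : (5 : ℝ) ≤ (Ee - 1)^3 := by nlinarith
  nlinarith [sq_nonneg Ee, c3']

lemma case_large {σ : ℝ} (hσ : 0 < σ) (hq : Ee ≤ σ * qq) :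
    σ + σ * qq / Ee ≤ σ * Ee ^ 2 + 2 * σ - 1 := by
  have hA : (0:ℝ) < (Ee - 1)^3 := pow_pos hE1_pos 3
  have hE := hE_pos
  have hx : σ * qq / Ee = σ * (2 * Ee ^ 2) / (Ee - 1)^3 := by
    rw [qq]; field_simp
  have h' : Ee * (Ee - 1)^3 ≤ σ * (2 * Ee^3) := by
    have h2 := mul_le_mul_of_nonneg_right hq hA.le
    rw [qq] at h2
    calc Ee * (Ee-1)^3 = Ee * (Ee-1)^3 := rfl
      _ ≤ σ * (2 * Ee ^ 3 / (Ee - 1) ^ 3) * (Ee-1)^3 := by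
          calc Ee * (Ee-1)^3 = Ee * (Ee-1)^3 := rfl
            _ ≤ _ := h2
      _ = σ * (2 * Ee^3) := by field_simp [hE1_pos.ne']
  have hA2 : (Ee - 1)^3 ≤ 2 * σ * Ee ^ 2 := by
    have hmul : (Ee-1)^3 * Ee ≤ (2 * σ * Ee^2) * Ee := by nlinarith [h']
    exact le_of_mul_le_mul_right hmul hE
  have key := mul_le_mul_of_nonneg_left num_key hσ.le
  rw [hx]
  have goal' : σ * (2 * Ee ^ 2) / (Ee - 1)^3 ≤ (σ * Ee ^ 2 + 2 * σ - 1) - σ := by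
    rw [div_le_iff₀ hA]
    nlinarith [key, hA2]
  linarith

lemma hE_gt1 : (1:ℝ) < Ee := by have := hE_gt; linarith

lemma msum_finRange (μ : Fin d → ℕ) :
    msum (List.finRange d) μ = Fintype.piFinset fun i => Finset.Iic (μ i) := by
  unfold msum
  congr 1
  funext i
  rw [if_pos (List.mem_finRange i)]

lemma sum_group (μ : Fin d → ℕ) (g : ℕ → ℝ) :
    ∑ κ ∈ Fintype.piFinset (fun i => Finset.Iic (μ i)),
      (∏ i, ((μ i).choose (κ i) : ℝ)) * g (∑ i, κ i)
    = ∑ k ∈ range ((∑ i, μ i) + 1), (((∑ i, μ i).choose k : ℝ)) * g k := by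
  have hmaps : ∀ κ ∈ Fintype.piFinset (fun i => Finset.Iic (μ i)),
      (∑ i, κ i) ∈ range ((∑ i, μ i) + 1) := by
    intro κ hκ
    rw [mem_range, Nat.lt_succ_iff]
    exact Finset.sum_le_sum fun i _ =>
      Finset.mem_Iic.mp (Fintype.mem_piFinset.mp hκ i)
  rw [← Finset.sum_fiberwise_of_maps_to hmaps
    (fun κ => (∏ i, ((μ i).choose (κ i) : ℝ)) * g (∑ i, κ i))]
  refine sum_congr rfl fun k _ => ?_
  calc ∑ κ ∈ (Fintype.piFinset fun i => Finset.Iic (μ i)).filter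
        (fun κ => ∑ i, κ i = k), (∏ i, ((μ i).choose (κ i) : ℝ)) * g (∑ i, κ i)
      = ∑ κ ∈ (Fintype.piFinset fun i => Finset.Iic (μ i)).filter
        (fun κ => ∑ i, κ i = k), (∏ i, ((μ i).choose (κ i) : ℝ)) * g k := by
        refine sum_congr rfl fun κ hκ => ?_
        rw [(Finset.mem_filter.mp hκ).2]
    _ = (∑ κ ∈ (Fintype.piFinset fun i => Finset.Iic (μ i)).filter
        (fun κ => ∑ i, κ i = k), (∏ i, ((μ i).choose (κ i) : ℝ))) * g k := by
        rw [Finset.sum_mul]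
    _ = (((∑ i, μ i).choose k : ℝ)) * g k := by
        congr 1
        rw [← vandermonde_pi μ k]
        push_cast
        rfl

lemma choose_fact {M k : ℕ} (hk : k ≤ M) :
    M.choose k * (k+2).factorial * (M-k).factorial = M.factorial * ((k+1)*(k+2)) := by
  calc M.choose k * (k + 2).factorial * (M - k).factorial
      = (M.choose k * k.factorial * (M - k).factorial) * ((k+1)*(k+2)) := by
        rw [Nat.factorial_succ, Nat.factorial_succ]; ring
    _ = M.factorial * ((k+1)*(k+2)) := by
        rw [Nat.choose_mul_factorial_mul_factorial hk]

lemma step3 (M : ℕ) :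
    ∑ k ∈ range (M + 1), ((M.choose k : ℝ)) *
        (((k+2).factorial : ℝ) * (((M-k).factorial : ℝ) * Ee ^ (M-k)))
      ≤ (M.factorial : ℝ) * Ee ^ M * qq := by
  have hterm : ∀ k ∈ range (M+1), ((M.choose k : ℝ)) *
      (((k+2).factorial : ℝ) * (((M-k).factorial : ℝ) * Ee ^ (M-k)))
      = (M.factorial : ℝ) * Ee ^ M * (((k:ℝ)+1) * ((k:ℝ)+2) * Ee⁻¹ ^ k) := by
    intro k hk
    have hk' : k ≤ M := mem_range_succ_iff.mp hk
    have hch : ((M.choose k : ℝ)) * ((k+2).factorial : ℝ) * ((M-k).factorial : ℝ)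
        = (M.factorial : ℝ) * (((k:ℝ)+1)*((k:ℝ)+2)) := by
      exact_mod_cast congrArg (Nat.cast : ℕ → ℝ) (choose_fact hk')
    have hpow : Ee ^ (M-k) = Ee ^ M * Ee⁻¹ ^ k := by
      have h2 : Ee ^ k ≠ 0 := pow_ne_zero k (ne_of_gt hE_pos)
      rw [inv_pow, ← div_eq_mul_inv, eq_div_iff h2]
      rw [← pow_add]
      congr 1
      omega
    calc ((M.choose k : ℝ)) * (((k+2).factorial : ℝ) * (((M-k).factorial : ℝ) * Ee ^ (M-k)))
        = (((M.choose k : ℝ)) * ((k+2).factorial : ℝ) * ((M-k).factorial : ℝ)) * Ee ^ (M-k) := by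
          ring
      _ = (M.factorial : ℝ) * (((k:ℝ)+1)*((k:ℝ)+2)) * (Ee ^ M * Ee⁻¹ ^ k) := by
          rw [hch, hpow]
      _ = (M.factorial : ℝ) * Ee ^ M * (((k:ℝ)+1) * ((k:ℝ)+2) * Ee⁻¹ ^ k) := by ring
  rw [Finset.sum_congr rfl hterm, ← Finset.mul_sum]
  have hsum := sum_kk_le (t := Ee⁻¹) (le_of_lt (inv_pos.mpr hE_pos))
    (by rw [inv_lt_one_iff₀]; right; exact hE_gt1) (M+1)
  rw [q_eq] at hsum
  have hpos : (0:ℝ) ≤ (M.factorial : ℝ) * Ee ^ M :=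
    mul_nonneg (Nat.cast_nonneg _) (pow_pos hE_pos M).le
  calc (M.factorial : ℝ) * Ee ^ M * ∑ k ∈ range (M+1), ((k:ℝ)+1) * ((k:ℝ)+2) * Ee⁻¹ ^ k
      ≤ (M.factorial : ℝ) * Ee ^ M * qq := mul_le_mul_of_nonneg_left hsum hpos

lemma master (σ : ℝ) (hσ : 0 < σ) (b : Fin d → ℝ) (hb : ∀ j, 0 < b j)
    (Φ : (Fin d → ℝ) → ℝ) (hΦ : ContDiff ℝ (⊤ : ℕ∞) Φ)
    (hbound : ∀ ν : Fin d → ℕ, ∀ y ∈ cube d,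
      |pdm ν Φ y| ≤ σ * (((∑ i, ν i) + 1).factorial : ℝ) * ∏ i, b i ^ ν i)
    (K : ℕ → ℝ) (hK0 : Real.exp σ ≤ K 0) (hKm : Monotone K)
    (hKrec : ∀ N : ℕ, σ * qq * K N ≤ ((N:ℝ)+1) * Ee * K (N+1)) :
    ∀ N : ℕ, ∀ ν : Fin d → ℕ, (∑ i, ν i) = N → ∀ y ∈ cube d,
      |pdm ν (fun t => Real.exp (Φ t)) y|
        ≤ K N * (N.factorial : ℝ) * Ee ^ N * ∏ i, b i ^ ν i := by
  have hψs : ContDiff ℝ (⊤ : ℕ∞) (fun t => Real.exp (Φ t)) := Real.contDiff_exp.comp hΦ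
  have hKpos : ∀ n, 0 < K n := fun n =>
    lt_of_lt_of_le (lt_of_lt_of_le (Real.exp_pos σ) hK0) (hKm (Nat.zero_le n))
  intro N
  induction N using Nat.strong_induction_on with
  | _ N IH =>
    intro ν hν y hy
    rcases N with _ | M
    · -- base case
      have hν0 : ∀ i, ν i = 0 := fun i =>
        Finset.sum_eq_zero_iff.mp hν i (mem_univ i)
      have hpdm : pdm ν (fun t => Real.exp (Φ t)) = (fun t => Real.exp (Φ t)) :=
        pdl_zero (List.finRange d) _ (fun i _ => hν0 i)
      have hz : pdm (fun _ => 0 : Fin d → ℕ) Φ = Φ :=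
        pdl_zero (List.finRange d) Φ (fun i _ => rfl)
      have h0 := hbound (fun _ => 0) y hy
      rw [hz] at h0
      simp only [Finset.sum_const_zero, Nat.factorial_one, Nat.cast_one, pow_zero,
        Finset.prod_const_one, mul_one, zero_add] at h0
      have hprod : ∏ i, b i ^ ν i = 1 :=
        Finset.prod_eq_one fun i _ => by rw [hν0 i, pow_zero]
      rw [hpdm, hprod]
      simp only [Nat.factorial_zero, Nat.cast_one, pow_zero, mul_one]
      rw [abs_of_pos (Real.exp_pos _)]
      calc Real.exp (Φ y) ≤ Real.exp σ :=
            Real.exp_le_exp.mpr (le_trans (le_abs_self _) h0)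
        _ ≤ K 0 := hK0
    · -- inductive step
      have hM1 : ∑ i, ν i = M + 1 := hν
      obtain ⟨j0, hj0⟩ : ∃ i, ν i ≠ 0 := by
        by_contra h
        push_neg at h
        rw [Finset.sum_eq_zero (fun i _ => h i)] at hν
        omega
      have hTne : (Finset.univ.filter (fun i => ν i ≠ 0)).Nonempty :=
        ⟨j0, by simp [hj0]⟩
      set j := (Finset.univ.filter (fun i => ν i ≠ 0)).max' hTne with hj
      have hjν : ν j ≠ 0 :=
        (Finset.mem_filter.mp (Finset.max'_mem _ hTne)).2
      have hafter : ∀ i, j < i → ν i = 0 := by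
        intro i hi
        by_contra h
        exact absurd (Finset.le_max' _ i (by simp [h])) (not_le.mpr hi)
      set μ := Function.update ν j (ν j - 1) with hμdef
      have hμj : μ j = ν j - 1 := by rw [hμdef]; exact Function.update_self _ _ _
      have hμne : ∀ i, i ≠ j → μ i = ν i := fun i h => by
        rw [hμdef]; exact Function.update_of_ne h _ _
      have hμle : ∀ i, μ i ≤ ν i := by
        intro i
        by_cases h : i = j
        · subst h; omega
        · rw [hμne i h]
      have hμsum : ∑ i, μ i = M := by
        have h1 := (Finset.add_sum_erase univ ν (mem_univ j))
        have h2 := (Finset.add_sum_erase univ μ (mem_univ j))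
        have h3 : ∑ i ∈ univ.erase j, μ i = ∑ i ∈ univ.erase j, ν i :=
          sum_congr rfl fun i hi => hμne i (Finset.ne_of_mem_erase hi)
        omega
      have hpeel : pdm ν (fun t => Real.exp (Φ t))
          = pdm μ (fun t => pd j Φ t * Real.exp (Φ t)) := by
        rw [pdm_peel ν j _ (Nat.pos_of_ne_zero hjν) hafter, ← hμdef]
        rw [pd_exp j hΦ]
      set S := Fintype.piFinset (fun i => Finset.Iic (μ i)) with hS
      have hX : pdm μ (fun t => pd j Φ t * Real.exp (Φ t)) y
          = ∑ κ ∈ S, (∏ i, ((μ i).choose (κ i) : ℝ)) *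
              (pdm κ (pd j Φ) y * pdm (fun i => μ i - κ i) (fun t => Real.exp (Φ t)) y) := by
        have h := congrFun (pdl_leibniz (List.finRange d) (List.nodup_finRange d) μ
          (pd_smooth j hΦ) hψs) y
        rw [msum_finRange, List.toFinset_finRange] at h
        exact h
      have hterm : ∀ κ ∈ S,
          |(∏ i, ((μ i).choose (κ i) : ℝ)) *
              (pdm κ (pd j Φ) y * pdm (fun i => μ i - κ i) (fun t => Real.exp (Φ t)) y)|
          ≤ (∏ i, ((μ i).choose (κ i) : ℝ)) * (σ * K M *
              ((((∑ i, κ i)+2).factorial : ℝ) *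
                (((M - ∑ i, κ i).factorial : ℝ) * Ee ^ (M - ∑ i, κ i))
                * ∏ i, b i ^ ν i)) := by
        intro κ hκ
        have hκle : ∀ i, κ i ≤ μ i := fun i =>
          Finset.mem_Iic.mp (Fintype.mem_piFinset.mp hκ i)
        have hsM : (∑ i, κ i) ≤ M := hμsum ▸ (Finset.sum_le_sum fun i _ => hκle i)
        set s := ∑ i, κ i with hsdef
        -- bound for the Φ factor
        set ν' : Fin d → ℕ := fun i => κ i + if i = j then 1 else 0 with hν'
        have hν'j : ν' j = κ j + 1 := by simp [hν']
        have hν'pos : 0 < ν' j := by omega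
        have hν'after : ∀ i, j < i → ν' i = 0 := by
          intro i hi
          have hij : i ≠ j := ne_of_gt hi
          have h1 : κ i ≤ μ i := hκle i
          have h2 : μ i = ν i := hμne i hij
          have h3 : ν i = 0 := hafter i hi
          simp only [hν', if_neg hij, add_zero]
          omega
        have hupdate : Function.update ν' j (ν' j - 1) = κ := by
          funext i
          by_cases h : i = j
          · subst h
            rw [Function.update_self, hν'j]
            omega
          · rw [Function.update_of_ne h]
            simp [hν', h]
        have hAeq : pdm κ (pd j Φ) = pdm ν' Φ := by
          rw [pdm_peel ν' j Φ hν'pos hν'after, hupdate]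
        have hν's : ∑ i, ν' i = s + 1 := by
          rw [hν', Finset.sum_add_distrib, ← hsdef]
          simp
        have hA := hbound ν' y hy
        rw [← hAeq, hν's] at hA
        have hs2 : s + 1 + 1 = s + 2 := by omega
        rw [hs2] at hA
        -- bound for the exp factor via induction hypothesis
        have hBsum : ∑ i, (μ i - κ i) = M - s := by
          have h4 : ∑ i, (μ i - κ i) + ∑ i, κ i = ∑ i, μ i := by
            rw [← Finset.sum_add_distrib]
            exact sum_congr rfl fun i _ => by have := hκle i; omega
          omega
        have hB := IH (M - s) (by omega) (fun i => μ i - κ i) hBsum y hy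
        have hB' : |pdm (fun i => μ i - κ i) (fun t => Real.exp (Φ t)) y|
            ≤ K M * ((M-s).factorial : ℝ) * Ee ^ (M-s) * ∏ i, b i ^ (μ i - κ i) := by
          refine le_trans hB ?_
          have hKle : K (M-s) ≤ K M := hKm (Nat.sub_le M s)
          exact mul_le_mul_of_nonneg_right (mul_le_mul_of_nonneg_right
            (mul_le_mul_of_nonneg_right hKle (Nat.cast_nonneg _)) (pow_pos hE_pos _).le)
            (prod_nonneg fun i _ => pow_nonneg (hb i).le _)
        -- combine the two bounds
        have hcomb : (∏ i, b i ^ ν' i) * (∏ i, b i ^ (μ i - κ i)) = ∏ i, b i ^ ν i := by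
          rw [← Finset.prod_mul_distrib]
          refine Finset.prod_congr rfl fun i _ => ?_
          rw [← pow_add]
          congr 1
          by_cases h : i = j
          · subst h
            rw [hν'j]
            have h6 := hκle j
            have h7 := Nat.pos_of_ne_zero hjν
            omega
          · simp only [hν', if_neg h, add_zero]
            have h5 := hμne i h
            have := hκle i
            omega
        have hcnn : (0:ℝ) ≤ ∏ i, ((μ i).choose (κ i) : ℝ) :=
          prod_nonneg fun i _ => Nat.cast_nonneg _
        have hXnn : (0:ℝ) ≤ σ * ((s+2).factorial : ℝ) * ∏ i, b i ^ ν' i :=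
          mul_nonneg (mul_nonneg hσ.le (Nat.cast_nonneg _))
            (prod_nonneg fun i _ => pow_nonneg (hb i).le _)
        calc |(∏ i, ((μ i).choose (κ i) : ℝ)) *
              (pdm κ (pd j Φ) y * pdm (fun i => μ i - κ i) (fun t => Real.exp (Φ t)) y)|
            = (∏ i, ((μ i).choose (κ i) : ℝ)) *
              (|pdm κ (pd j Φ) y| * |pdm (fun i => μ i - κ i) (fun t => Real.exp (Φ t)) y|) := by
              rw [abs_mul, abs_mul, abs_of_nonneg hcnn]
          _ ≤ (∏ i, ((μ i).choose (κ i) : ℝ)) *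
              ((σ * ((s+2).factorial : ℝ) * ∏ i, b i ^ ν' i) *
                (K M * ((M-s).factorial : ℝ) * Ee ^ (M-s) * ∏ i, b i ^ (μ i - κ i))) := by
              refine mul_le_mul_of_nonneg_left ?_ hcnn
              exact mul_le_mul hA hB' (abs_nonneg _) hXnn
          _ = (∏ i, ((μ i).choose (κ i) : ℝ)) * (σ * K M *
              (((s+2).factorial : ℝ) * (((M-s).factorial : ℝ) * Ee ^ (M-s))
                * ((∏ i, b i ^ ν' i) * (∏ i, b i ^ (μ i - κ i))))) := by ring
          _ = (∏ i, ((μ i).choose (κ i) : ℝ)) * (σ * K M *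
              (((s+2).factorial : ℝ) * (((M-s).factorial : ℝ) * Ee ^ (M-s))
                * ∏ i, b i ^ ν i)) := by rw [hcomb]
      -- sum up
      have hPnn : (0:ℝ) ≤ ∏ i, b i ^ ν i :=
        prod_nonneg fun i _ => pow_nonneg (hb i).le _
      have hσK : (0:ℝ) ≤ σ * K M * ∏ i, b i ^ ν i :=
        mul_nonneg (mul_nonneg hσ.le (hKpos M).le) hPnn
      calc |pdm ν (fun t => Real.exp (Φ t)) y|
          = |∑ κ ∈ S, (∏ i, ((μ i).choose (κ i) : ℝ)) *
              (pdm κ (pd j Φ) y * pdm (fun i => μ i - κ i) (fun t => Real.exp (Φ t)) y)| := by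
            rw [hpeel, hX]
        _ ≤ ∑ κ ∈ S, |(∏ i, ((μ i).choose (κ i) : ℝ)) *
              (pdm κ (pd j Φ) y * pdm (fun i => μ i - κ i) (fun t => Real.exp (Φ t)) y)| :=
            Finset.abs_sum_le_sum_abs _ _
        _ ≤ ∑ κ ∈ S, (∏ i, ((μ i).choose (κ i) : ℝ)) * (σ * K M *
              ((((∑ i, κ i)+2).factorial : ℝ) *
                (((M - ∑ i, κ i).factorial : ℝ) * Ee ^ (M - ∑ i, κ i))
                * ∏ i, b i ^ ν i)) := Finset.sum_le_sum hterm
        _ = ∑ k ∈ range (M + 1), ((M.choose k : ℝ)) * (σ * K M *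
              (((k+2).factorial : ℝ) * (((M-k).factorial : ℝ) * Ee ^ (M-k))
                * ∏ i, b i ^ ν i)) := by
            have := sum_group μ (fun k => σ * K M *
              (((k+2).factorial : ℝ) * (((M-k).factorial : ℝ) * Ee ^ (M-k))
                * ∏ i, b i ^ ν i))
            rw [hμsum] at this
            exact this
        _ = (σ * K M * ∏ i, b i ^ ν i) * ∑ k ∈ range (M + 1), ((M.choose k : ℝ)) *
              (((k+2).factorial : ℝ) * (((M-k).factorial : ℝ) * Ee ^ (M-k))) := by
            rw [Finset.mul_sum]
            exact sum_congr rfl fun k _ => by ring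
        _ ≤ (σ * K M * ∏ i, b i ^ ν i) * ((M.factorial : ℝ) * Ee ^ M * qq) :=
            mul_le_mul_of_nonneg_left (step3 M) hσK
        _ = (σ * qq * K M) * ((M.factorial : ℝ) * Ee ^ M) * ∏ i, b i ^ ν i := by ring
        _ ≤ (((M:ℝ)+1) * Ee * K (M+1)) * ((M.factorial : ℝ) * Ee ^ M) * ∏ i, b i ^ ν i := by
            refine mul_le_mul_of_nonneg_right (mul_le_mul_of_nonneg_right (hKrec M) ?_) hPnn
            exact mul_nonneg (Nat.cast_nonneg _) (pow_pos hE_pos _).le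
        _ = K (M+1) * ((M+1).factorial : ℝ) * Ee ^ (M+1) * ∏ i, b i ^ ν i := by
            rw [Nat.factorial_succ]
            push_cast
            ring

end ExpBd

open ExpBd Finset in
theorem exp_derivative_bound {d : ℕ} (σ : ℝ) (hσ : 0 < σ)
    (b : Fin d → ℝ) (hb : ∀ j, 0 < b j)
    (Φ : (Fin d → ℝ) → ℝ) (hΦ : ContDiff ℝ (⊤ : ℕ∞) Φ)
    (hbound : ∀ ν : Fin d → ℕ, ∀ y ∈ cube d,
      |pdm ν Φ y| ≤ σ * (((∑ i, ν i) + 1).factorial : ℝ) * ∏ i, b i ^ ν i) :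
    ∀ ν : Fin d → ℕ, ∀ y ∈ cube d,
      |pdm ν (fun t => Real.exp (Φ t)) y| ≤
        Real.exp (max σ (σ * Real.exp 1 ^ 2 + 2 * σ - 1)) *
          ((∑ i, ν i).factorial : ℝ) * ∏ i, (Real.exp 1 * b i) ^ ν i := by
  intro ν y hy
  have hEe : Real.exp 1 = Ee := rfl
  obtain ⟨K, hK0, hKm, hKrec, hKC⟩ : ∃ K : ℕ → ℝ, Real.exp σ ≤ K 0 ∧ Monotone K ∧
      (∀ N : ℕ, σ * qq * K N ≤ ((N:ℝ)+1) * Ee * K (N+1)) ∧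
      (∀ n, K n ≤ Real.exp (max σ (σ * Ee ^ 2 + 2 * σ - 1))) := by
    by_cases hcase : σ * qq ≤ Ee
    · refine ⟨fun _ => Real.exp σ, le_refl _, monotone_const, fun N => ?_, fun n =>
        Real.exp_le_exp.mpr (le_max_left _ _)⟩
      have h1 : Ee ≤ ((N:ℝ)+1) * Ee := by
        nlinarith [hE_pos, Nat.cast_nonneg (α := ℝ) N]
      exact mul_le_mul_of_nonneg_right (le_trans hcase h1) (Real.exp_pos σ).le
    · push_neg at hcase
      set x := σ * qq / Ee with hx
      have hx0 : 0 ≤ x := by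
        have := hE_pos; have := hσ; have := hq_pos
        positivity
      refine ⟨fun n => Real.exp σ * ∑ r ∈ range (n+1), x ^ r / r.factorial,
        ?_, ?_, ?_, ?_⟩
      · simp
      · intro a c hac
        refine mul_le_mul_of_nonneg_left ?_ (Real.exp_pos σ).le
        refine sum_le_sum_of_subset_of_nonneg (range_subset_range.mpr (by omega)) ?_
        intro i _ _
        positivity
      · intro N
        have hEq : σ * qq = Ee * x := by
          rw [hx]
          field_simp [ne_of_gt hE_pos]
        have h := partial_exp_ratio hx0 N
        calc σ * qq * (Real.exp σ * ∑ r ∈ range (N+1), x ^ r / r.factorial)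
            = (Ee * Real.exp σ) * (x * ∑ r ∈ range (N+1), x ^ r / r.factorial) := by
              rw [hEq]; ring
          _ ≤ (Ee * Real.exp σ) * (((N:ℝ)+1) * ∑ r ∈ range (N+2), x ^ r / r.factorial) := by
              refine mul_le_mul_of_nonneg_left h ?_
              exact mul_nonneg hE_pos.le (Real.exp_pos σ).le
          _ = ((N:ℝ)+1) * Ee * (Real.exp σ * ∑ r ∈ range (N+1+1), x ^ r / r.factorial) := by
              rw [show N+1+1 = N+2 from rfl]
              ring
      · intro n
        have h1 : ∑ r ∈ range (n+1), x ^ r / r.factorial ≤ Real.exp x :=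
          Real.sum_le_exp_of_nonneg hx0 (n+1)
        calc Real.exp σ * ∑ r ∈ range (n+1), x ^ r / r.factorial
            ≤ Real.exp σ * Real.exp x :=
              mul_le_mul_of_nonneg_left h1 (Real.exp_pos σ).le
          _ = Real.exp (σ + x) := (Real.exp_add σ x).symm
          _ ≤ Real.exp (max σ (σ * Ee ^ 2 + 2 * σ - 1)) := by
              refine Real.exp_le_exp.mpr (le_trans ?_ (le_max_right _ _))
              exact case_large hσ hcase.le
  have hmaster := master σ hσ b hb Φ hΦ hbound K hK0 hKm hKrec (∑ i, ν i) ν rfl y hy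
  have hsplit : ∏ i, (Real.exp 1 * b i) ^ ν i = Ee ^ (∑ i, ν i) * ∏ i, b i ^ ν i := by
    rw [hEe, ← Finset.prod_pow_eq_pow_sum, ← Finset.prod_mul_distrib]
    exact Finset.prod_congr rfl fun i _ => (mul_pow _ _ _)
  have hPnn : (0:ℝ) ≤ ∏ i, b i ^ ν i :=
    prod_nonneg fun i _ => pow_nonneg (hb i).le _
  rw [hEe]
  calc |pdm ν (fun t => Real.exp (Φ t)) y|
      ≤ K (∑ i, ν i) * ((∑ i, ν i).factorial : ℝ) * Ee ^ (∑ i, ν i) * ∏ i, b i ^ ν i :=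
        hmaster
    _ ≤ Real.exp (max σ (σ * Ee ^ 2 + 2 * σ - 1)) * ((∑ i, ν i).factorial : ℝ)
          * Ee ^ (∑ i, ν i) * ∏ i, b i ^ ν i := by
        refine mul_le_mul_of_nonneg_right (mul_le_mul_of_nonneg_right
          (mul_le_mul_of_nonneg_right (hKC _) (Nat.cast_nonneg _)) (pow_pos hE_pos _).le)
          hPnn
    _ = Real.exp (max σ (σ * Ee ^ 2 + 2 * σ - 1)) * ((∑ i, ν i).factorial : ℝ)
          * ∏ i, (Real.exp 1 * b i) ^ ν i := by
        rw [hsplit]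
        ring
end

section
/- Suppose smooth functions Φ : [−1/2,1/2]^d → ℝ and q : [−1/2,1/2]^d → Z (Z a Banach space) satisfy |∂^ν exp(Φ(y))| ≤ K·|ν|!·(e b)^ν and ‖∂^ν q(y)‖_Z ≤ M·(|ν|+1)!·b^ν for all multi-indices ν and all y, with constants K, M > 0 and b ∈ (0,∞)^d. Then ‖∂^ν (exp(Φ(y))·q(y))‖_Z ≤ (K·M/2)·(|ν|+2)!·(e b)^ν for all ν and y. -/
set_option maxHeartbeats 1000000


section
variable {d : ℕ} {Z : Type*} [NormedAddCommGroup Z] [NormedSpace ℝ Z]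

noncomputable def Dl (l : List (Fin d)) (ν : Fin d → ℕ) (f : (Fin d → ℝ) → Z) :
    (Fin d → ℝ) → Z :=
  l.foldr (fun j g => (pd j)^[ν j] g) f

lemma pdm_eq_Dl (ν : Fin d → ℕ) (f : (Fin d → ℝ) → Z) : pdm ν f = Dl (List.finRange d) ν f := rfl

lemma Dl_nil (ν : Fin d → ℕ) (f : (Fin d → ℝ) → Z) : Dl [] ν f = f := rfl

lemma Dl_cons (j : Fin d) (l : List (Fin d)) (ν : Fin d → ℕ) (f : (Fin d → ℝ) → Z) :
    Dl (j :: l) ν f = (pd j)^[ν j] (Dl l ν f) := rfl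

lemma contDiff_pd (j : Fin d) {f : (Fin d → ℝ) → Z} (hf : ContDiff ℝ (⊤ : ℕ∞) f) :
    ContDiff ℝ (⊤ : ℕ∞) (pd j f) :=
  (hf.fderiv_right (by simp)).clm_apply contDiff_const

lemma contDiff_pd_iter (j : Fin d) (n : ℕ) {f : (Fin d → ℝ) → Z} (hf : ContDiff ℝ (⊤ : ℕ∞) f) :
    ContDiff ℝ (⊤ : ℕ∞) ((pd j)^[n] f) := by
  induction n with
  | zero => simpa using hf
  | succ n ih => rw [Function.iterate_succ_apply']; exact contDiff_pd j ih

lemma contDiff_Dl (l : List (Fin d)) (ν : Fin d → ℕ) {f : (Fin d → ℝ) → Z}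
    (hf : ContDiff ℝ (⊤ : ℕ∞) f) : ContDiff ℝ (⊤ : ℕ∞) (Dl l ν f) := by
  induction l with
  | nil => exact hf
  | cons j l ih => rw [Dl_cons]; exact contDiff_pd_iter j _ ih

lemma contDiff_pdm (ν : Fin d → ℕ) {f : (Fin d → ℝ) → Z} (hf : ContDiff ℝ (⊤ : ℕ∞) f) :
    ContDiff ℝ (⊤ : ℕ∞) (pdm ν f) := contDiff_Dl _ _ hf

lemma Dl_congr (l : List (Fin d)) {ν μ : Fin d → ℕ} (h : ∀ i ∈ l, ν i = μ i)
    (f : (Fin d → ℝ) → Z) : Dl l ν f = Dl l μ f := by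
  induction l with
  | nil => rfl
  | cons j l ih =>
    rw [Dl_cons, Dl_cons, ih (fun i hi => h i (List.mem_cons_of_mem j hi)),
      h j (List.mem_cons_self)]

lemma Dl_append_zero (pre l : List (Fin d)) {ν : Fin d → ℕ} (h : ∀ i ∈ pre, ν i = 0)
    (f : (Fin d → ℝ) → Z) : Dl (pre ++ l) ν f = Dl l ν f := by
  induction pre with
  | nil => rfl
  | cons j p ih =>
    rw [List.cons_append, Dl_cons, h j (List.mem_cons_self),
      ih (fun i hi => h i (List.mem_cons_of_mem j hi))]
    rfl

lemma pdm_eq_Dl_suffix {pre l : List (Fin d)} (hl : List.finRange d = pre ++ l)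
    {ν : Fin d → ℕ} (h : ∀ i ∉ l, ν i = 0) (f : (Fin d → ℝ) → Z) :
    pdm ν f = Dl l ν f := by
  rw [pdm_eq_Dl, hl]
  refine Dl_append_zero pre l (fun i hi => h i ?_) f
  have hnd : (pre ++ l).Nodup := hl ▸ List.nodup_finRange d
  exact fun hil => (List.disjoint_of_nodup_append hnd) hi hil

lemma pdm_zero (f : (Fin d → ℝ) → Z) : pdm (fun _ => 0) f = f := by
  rw [pdm_eq_Dl]
  induction List.finRange d with
  | nil => rfl
  | cons j l ih => rw [Dl_cons, ih]; rfl

lemma pd_sum {ι : Type*} (j : Fin d) (s : Finset ι) (F : ι → (Fin d → ℝ) → Z)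
    (hF : ∀ a ∈ s, Differentiable ℝ (F a)) :
    pd j (fun y => ∑ a ∈ s, F a y) = fun y => ∑ a ∈ s, pd j (F a) y := by
  funext y
  simp only [pd]
  rw [fderiv_fun_sum (fun a ha => (hF a ha).differentiableAt)]
  simp

lemma pd_const_smul (j : Fin d) (c : ℝ) {f : (Fin d → ℝ) → Z} (hf : Differentiable ℝ f) :
    pd j (fun y => c • f y) = fun y => c • pd j f y := by
  funext y
  simp only [pd]
  rw [fderiv_fun_const_smul (hf y) c]
  simp

lemma pd_smul (j : Fin d) {f : (Fin d → ℝ) → ℝ} {g : (Fin d → ℝ) → Z}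
    (hf : Differentiable ℝ f) (hg : Differentiable ℝ g) :
    pd j (fun y => f y • g y) = fun y => (pd j f y) • g y + f y • pd j g y := by
  funext y
  simp only [pd]
  rw [fderiv_fun_smul (hf y) (hg y)]
  simp [add_comm]

lemma choose_shift (n : ℕ) (A : ℕ → ℝ) (B : ℕ → Z) :
    ∑ k ∈ Finset.range (n+1), (n.choose k : ℝ) • (A (k+1) • B (n-k) + A k • B (n-k+1))
    = ∑ k ∈ Finset.range (n+2), ((n+1).choose k : ℝ) • (A k • B (n+1-k)) := by
  rw [Finset.sum_range_succ' (fun k => ((n+1).choose k : ℝ) • (A k • B (n+1-k))) (n+1)]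
  simp only [smul_add, Finset.sum_add_distrib]
  have h1 : ∀ k, ((n+1).choose (k+1) : ℝ) • (A (k+1) • B (n+1-(k+1)))
      = (n.choose k : ℝ) • (A (k+1) • B (n-k)) + (n.choose (k+1) : ℝ) • (A (k+1) • B (n-k)) := by
    intro k
    rw [Nat.choose_succ_succ, Nat.succ_sub_succ]
    push_cast
    rw [add_smul]
  simp only [h1, Finset.sum_add_distrib]
  have h2 : ∑ k ∈ Finset.range (n+1), (n.choose k : ℝ) • (A k • B (n-k+1))
      = (∑ k ∈ Finset.range (n+1), (n.choose (k+1) : ℝ) • (A (k+1) • B (n-k)))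
        + ((n+1).choose 0 : ℝ) • (A 0 • B (n+1)) := by
    rw [Finset.sum_range_succ' (fun k => (n.choose k : ℝ) • (A k • B (n-k+1))) n,
      Finset.sum_range_succ (fun k => (n.choose (k+1) : ℝ) • (A (k+1) • B (n-k))),
      Nat.choose_succ_self]
    simp only [Nat.cast_zero, zero_smul, add_zero, Nat.choose_zero_right, Nat.sub_zero,
      Nat.cast_one, one_smul]
    congr 1
    refine Finset.sum_congr rfl fun k hk => ?_
    have hk' : n - (k+1) + 1 = n - k := by have := Finset.mem_range.mp hk; omega
    rw [hk']
  rw [h2]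
  abel

lemma pd_iter_sum {ι : Type*} (j : Fin d) (n : ℕ) (s : Finset ι) (F : ι → (Fin d → ℝ) → Z)
    (hF : ∀ a ∈ s, ContDiff ℝ (⊤ : ℕ∞) (F a)) :
    (pd j)^[n] (fun y => ∑ a ∈ s, F a y) = fun y => ∑ a ∈ s, (pd j)^[n] (F a) y := by
  induction n with
  | zero => simp
  | succ n ih =>
    rw [Function.iterate_succ_apply', ih,
      pd_sum j s _ (fun a ha => (contDiff_pd_iter j n (hF a ha)).differentiable (by simp))]
    funext y
    simp [Function.iterate_succ_apply']

lemma pd_iter_const_smul (j : Fin d) (n : ℕ) (c : ℝ) {f : (Fin d → ℝ) → Z}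
    (hf : ContDiff ℝ (⊤ : ℕ∞) f) :
    (pd j)^[n] (fun y => c • f y) = fun y => c • (pd j)^[n] f y := by
  induction n with
  | zero => simp
  | succ n ih =>
    rw [Function.iterate_succ_apply', ih,
      pd_const_smul j c ((contDiff_pd_iter j n hf).differentiable (by simp))]
    funext y
    simp [Function.iterate_succ_apply']

lemma pd_iter_leibniz (j : Fin d) (n : ℕ) {f : (Fin d → ℝ) → ℝ} {g : (Fin d → ℝ) → Z}
    (hf : ContDiff ℝ (⊤ : ℕ∞) f) (hg : ContDiff ℝ (⊤ : ℕ∞) g) :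
    (pd j)^[n] (fun y => f y • g y) =
      fun y => ∑ k ∈ Finset.range (n+1),
        (n.choose k : ℝ) • ((pd j)^[k] f y • (pd j)^[n-k] g y) := by
  induction n with
  | zero => funext y; simp
  | succ n ih =>
    rw [Function.iterate_succ_apply', ih,
      pd_sum j _ (fun k y => (n.choose k : ℝ) • ((pd j)^[k] f y • (pd j)^[n-k] g y))
        (fun k _ => (((contDiff_pd_iter j k hf).smul
        (contDiff_pd_iter j (n-k) hg)).const_smul _).differentiable (by simp))]
    funext y
    have hterm : ∀ k, pd j (fun y => (n.choose k : ℝ) • ((pd j)^[k] f y • (pd j)^[n-k] g y)) y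
        = (n.choose k : ℝ) • ((pd j)^[k+1] f y • (pd j)^[n-k] g y
            + (pd j)^[k] f y • (pd j)^[n-k+1] g y) := by
      intro k
      rw [pd_const_smul j _ (f := fun y => (pd j)^[k] f y • (pd j)^[n-k] g y) (((contDiff_pd_iter j k hf).smul
          (contDiff_pd_iter j (n-k) hg)).differentiable (by simp)),
        pd_smul j ((contDiff_pd_iter j k hf).differentiable (by simp))
          ((contDiff_pd_iter j (n-k) hg).differentiable (by simp))]
      simp [Function.iterate_succ_apply']
    simp only [hterm]
    exact choose_shift n (fun k => (pd j)^[k] f y) (fun k => (pd j)^[k] g y)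



lemma pd_iter_pdm {pre l : List (Fin d)} {j : Fin d}
    (hl : List.finRange d = pre ++ (j :: l)) {m : Fin d → ℕ}
    (hm : ∀ i ∉ l, m i = 0) (k : ℕ) (f : (Fin d → ℝ) → Z) :
    (pd j)^[k] (pdm m f) = pdm (Function.update m j k) f := by
  have hnd : (pre ++ (j :: l)).Nodup := hl ▸ List.nodup_finRange d
  have hjl : j ∉ l := (List.nodup_cons.mp hnd.of_append_right).1
  have h1 : pdm m f = Dl l m f := by
    refine pdm_eq_Dl_suffix (pre := pre ++ [j]) ?_ hm f
    rw [hl]; simp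
  have h2 : pdm (Function.update m j k) f = Dl (j :: l) (Function.update m j k) f := by
    refine pdm_eq_Dl_suffix hl ?_ f
    intro i hi
    have hij : i ≠ j := fun h => hi (by rw [h]; exact List.mem_cons_self)
    rw [Function.update_of_ne hij]
    exact hm i (fun h => hi (List.mem_cons_of_mem j h))
  rw [h1, h2, Dl_cons, Function.update_self]
  congr 1
  refine Dl_congr l (fun i hi => ?_) f
  exact (Function.update_of_ne (ne_of_mem_of_not_mem hi hjl) k m).symm

lemma Dl_leibniz (l : List (Fin d)) : ∀ (pre : List (Fin d)),
    List.finRange d = pre ++ l → ∀ (ν : Fin d → ℕ), (∀ i ∉ l, ν i = 0) →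
    ∀ {f : (Fin d → ℝ) → ℝ} {g : (Fin d → ℝ) → Z}, ContDiff ℝ (⊤ : ℕ∞) f → ContDiff ℝ (⊤ : ℕ∞) g →
    Dl l ν (fun y => f y • g y) = fun y =>
      ∑ m ∈ Fintype.piFinset (fun i => Finset.Iic (ν i)),
        (∏ i, ((ν i).choose (m i) : ℝ)) •
          (pdm m f y • pdm (fun i => ν i - m i) g y) := by
  induction l with
  | nil =>
    intro pre hl ν hν f g hf hg
    have hν0 : ν = fun _ => 0 := funext fun i => hν i (List.not_mem_nil)
    subst hν0
    have hset : (Fintype.piFinset (fun i : Fin d => Finset.Iic ((fun _ => 0) i)))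
        = {fun _ => 0} := by
      ext m
      simp [Fintype.mem_piFinset, funext_iff]
    funext y
    rw [hset, Finset.sum_singleton]
    simp [Dl_nil, pdm_zero]
  | cons j l ih =>
    intro pre hl ν hν f g hf hg
    have hnd : (pre ++ (j :: l)).Nodup := hl ▸ List.nodup_finRange d
    have hjl : j ∉ l := (List.nodup_cons.mp hnd.of_append_right).1
    set ν' : Fin d → ℕ := Function.update ν j 0 with hν'def
    have hν' : ∀ i ∉ l, ν' i = 0 := by
      intro i hi
      by_cases hij : i = j
      · subst hij; simp [hν'def]
      · rw [hν'def, Function.update_of_ne hij]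
        exact hν i (by simp [hij, hi])
    have hl' : List.finRange d = (pre ++ [j]) ++ l := by rw [hl]; simp
    have step1 : Dl (j :: l) ν (fun y => f y • g y)
        = (pd j)^[ν j] (Dl l ν' (fun y => f y • g y)) := by
      rw [Dl_cons]
      congr 1
      refine Dl_congr l (fun i hi => ?_) _
      exact (Function.update_of_ne (ne_of_mem_of_not_mem hi hjl) 0 ν).symm
    rw [step1, ih (pre ++ [j]) hl' ν' hν' hf hg]
    have hsm : ∀ m : Fin d → ℕ, ContDiff ℝ (⊤ : ℕ∞)
        (fun y => pdm m f y • pdm (fun i => ν' i - m i) g y) :=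
      fun m => (contDiff_pdm m hf).smul (contDiff_pdm _ hg)
    rw [pd_iter_sum j (ν j) _ _ (fun m _ => (hsm m).const_smul _)]
    funext y
    have hterm : ∀ m ∈ Fintype.piFinset (fun i => Finset.Iic (ν' i)),
        (pd j)^[ν j] (fun y => (∏ i, ((ν' i).choose (m i) : ℝ)) •
            (pdm m f y • pdm (fun i => ν' i - m i) g y)) y
        = ∑ k ∈ Finset.range (ν j + 1),
            ((∏ i, ((ν' i).choose (m i) : ℝ)) * ((ν j).choose k : ℝ)) •
              (pdm (Function.update m j k) f y •
                pdm (fun i => ν i - (Function.update m j k) i) g y) := by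
      intro m hm
      have hmle : ∀ i, m i ≤ ν' i := fun i =>
        Finset.mem_Iic.mp (Fintype.mem_piFinset.mp hm i)
      have hmj : m j = 0 := by
        have := hmle j
        simpa [hν'def] using this
      have hmsupp : ∀ i ∉ l, m i = 0 := by
        intro i hi
        by_cases hij : i = j
        · exact hij ▸ hmj
        · have := hmle i
          rw [hν' i hi] at this
          omega
      have hgsupp : ∀ i ∉ l, ν' i - m i = 0 := fun i hi => by rw [hν' i hi]; omega
      rw [pd_iter_const_smul j (ν j) _ (hsm m),
        pd_iter_leibniz j (ν j) (contDiff_pdm m hf) (contDiff_pdm _ hg)]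
      simp only [Finset.smul_sum]
      refine Finset.sum_congr rfl fun k hk => ?_
      rw [mul_smul]
      congr 1
      rw [pd_iter_pdm hl hmsupp k f, pd_iter_pdm hl hgsupp (ν j - k) g]
      have harg : Function.update (fun i => ν' i - m i) j (ν j - k)
          = fun i => ν i - Function.update m j k i := by
        funext i
        by_cases hij : i = j
        · subst hij
          simp [hν'def, hmj]
        · simp [Function.update_of_ne hij, hν'def]
      rw [harg]
    rw [Finset.sum_congr rfl hterm, ← Finset.sum_product']
    refine Finset.sum_nbij' (fun p => Function.update p.1 j p.2)
      (fun m' => (Function.update m' j 0, m' j)) ?_ ?_ ?_ ?_ ?_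
    · rintro ⟨m, k⟩ hp
      rw [Finset.mem_product] at hp
      obtain ⟨hm, hk⟩ := hp
      have hmle : ∀ i, m i ≤ ν' i := fun i =>
        Finset.mem_Iic.mp (Fintype.mem_piFinset.mp hm i)
      rw [Fintype.mem_piFinset]
      intro i
      rw [Finset.mem_Iic]
      dsimp only
      by_cases hij : i = j
      · subst hij
        rw [Function.update_self]
        exact Nat.lt_succ_iff.mp (Finset.mem_range.mp hk)
      · rw [Function.update_of_ne hij]
        have := hmle i
        rwa [hν'def, Function.update_of_ne hij] at this
    · intro m' hm'
      have hle : ∀ i, m' i ≤ ν i := fun i =>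
        Finset.mem_Iic.mp (Fintype.mem_piFinset.mp hm' i)
      rw [Finset.mem_product]
      constructor
      · rw [Fintype.mem_piFinset]
        intro i
        rw [Finset.mem_Iic]
        dsimp only
        by_cases hij : i = j
        · subst hij; simp
        · rw [Function.update_of_ne hij, hν'def, Function.update_of_ne hij]
          exact hle i
      · rw [Finset.mem_range, Nat.lt_succ_iff]
        exact hle j
    · rintro ⟨m, k⟩ hp
      rw [Finset.mem_product] at hp
      have hmj : m j = 0 := by
        have := Finset.mem_Iic.mp (Fintype.mem_piFinset.mp hp.1 j)
        simpa [hν'def] using this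
      dsimp only
      have h1 : Function.update (Function.update m j k) j 0 = m := by
        funext i
        by_cases hij : i = j
        · subst hij; simp [hmj]
        · simp [Function.update_of_ne hij]
      have h2 : (Function.update m j k) j = k := Function.update_self j k m
      rw [Prod.mk.injEq]
      exact ⟨h1, h2⟩
    · intro m' _
      dsimp only
      funext i
      by_cases hij : i = j
      · subst hij; simp
      · simp [Function.update_of_ne hij]
    · rintro ⟨m, k⟩ hp
      rw [Finset.mem_product] at hp
      have hmj : m j = 0 := by
        have := Finset.mem_Iic.mp (Fintype.mem_piFinset.mp hp.1 j)
        simpa [hν'def] using this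
      dsimp only
      congr 1
      rw [Finset.prod_eq_mul_prod_sdiff_singleton_of_mem (Finset.mem_univ j)
          (fun i => (((ν i).choose (Function.update m j k i) : ℝ))),
        Finset.prod_eq_mul_prod_sdiff_singleton_of_mem (Finset.mem_univ j)
          (fun i => (((ν' i).choose (m i) : ℝ)))]
      rw [Function.update_self, hν'def, Function.update_self, hmj]
      simp only [Nat.choose_self, Nat.cast_one, one_mul]
      rw [mul_comm]
      congr 1
      refine Finset.prod_congr rfl fun i hi => ?_
      have hij : i ≠ j := by
        simp only [Finset.mem_sdiff, Finset.mem_singleton] at hi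
        exact hi.2
      rw [Function.update_of_ne hij, Function.update_of_ne hij]

lemma pdm_leibniz (ν : Fin d → ℕ) {f : (Fin d → ℝ) → ℝ} {g : (Fin d → ℝ) → Z}
    (hf : ContDiff ℝ (⊤ : ℕ∞) f) (hg : ContDiff ℝ (⊤ : ℕ∞) g) :
    pdm ν (fun y => f y • g y) = fun y =>
      ∑ m ∈ Fintype.piFinset (fun i => Finset.Iic (ν i)),
        (∏ i, ((ν i).choose (m i) : ℝ)) •
          (pdm m f y • pdm (fun i => ν i - m i) g y) := by
  rw [pdm_eq_Dl]
  exact Dl_leibniz (List.finRange d) [] rfl ν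
    (fun i hi => absurd (List.mem_finRange i) hi) hf hg

end

lemma Iic_eq_range (n : ℕ) : Finset.Iic n = Finset.range (n+1) := by
  ext x; simp [Nat.lt_succ_iff]

lemma hexp (n : ℕ) : (Polynomial.X + 1 : Polynomial ℕ)^n
    = ∑ j ∈ Finset.Iic n, Polynomial.C (n.choose j) * Polynomial.X^j := by
  ext k
  rw [Polynomial.coeff_X_add_one_pow, Polynomial.finset_sum_coeff]
  simp only [Polynomial.coeff_C_mul, Polynomial.coeff_X_pow, mul_ite, mul_one, mul_zero]
  rw [Finset.sum_ite_eq (Finset.Iic n) k (fun j => n.choose j)]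
  by_cases h : k ≤ n
  · simp [h]
  · simp [h, Nat.choose_eq_zero_of_lt (lt_of_not_ge h), Nat.cast_id]

section
variable {d : ℕ}

lemma poly_key (ν : Fin d → ℕ) :
    ∑ m ∈ Fintype.piFinset (fun i => Finset.Iic (ν i)),
      Polynomial.C (∏ i, (ν i).choose (m i)) * Polynomial.X ^ (∑ i, m i)
    = (Polynomial.X + 1 : Polynomial ℕ) ^ (∑ i, ν i) := by
  rw [← Finset.prod_pow_eq_pow_sum Finset.univ ν (Polynomial.X + 1 : Polynomial ℕ)]
  rw [Finset.prod_congr rfl (fun i (_ : i ∈ Finset.univ) => hexp (ν i))]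
  rw [Finset.prod_univ_sum (fun i => Finset.Iic (ν i))
    (fun i j => Polynomial.C ((ν i).choose j) * Polynomial.X ^ j)]
  refine Finset.sum_congr rfl fun m _ => ?_
  rw [Finset.prod_mul_distrib, map_prod (Polynomial.C : ℕ →+* Polynomial ℕ) (fun i => (ν i).choose (m i)) Finset.univ, Finset.prod_pow_eq_pow_sum]

lemma multi_vdm (ν : Fin d → ℕ) (k : ℕ) :
    ∑ m ∈ (Fintype.piFinset (fun i => Finset.Iic (ν i))).filter
        (fun m => (∑ i, m i) = k), ∏ i, (ν i).choose (m i)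
    = (∑ i, ν i).choose k := by
  have h := congrArg (fun p => Polynomial.coeff p k) (poly_key ν)
  simp only [Polynomial.finset_sum_coeff, Polynomial.coeff_C_mul, Polynomial.coeff_X_pow,
    Polynomial.coeff_X_add_one_pow, Nat.cast_id, mul_ite, mul_one, mul_zero] at h
  rw [Finset.sum_filter]
  rw [← h]
  refine Finset.sum_congr rfl fun m _ => ?_
  by_cases hm : (∑ i, m i) = k
  · simp [hm]
  · rw [if_neg hm, if_neg (show ¬ (k = ∑ i, m i) from fun h => hm h.symm)]

lemma gauss (n : ℕ) : 2 * (∑ k ∈ Finset.range (n+1), (n - k + 1)) = (n+1)*(n+2) := by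
  induction n with
  | zero => simp
  | succ n ih =>
    rw [Finset.sum_range_succ' (fun k => (n + 1 - k + 1)) (n+1)]
    have h : ∀ k, n + 1 - (k+1) + 1 = n - k + 1 := fun k => by omega
    simp only [h, Nat.sub_zero]
    rw [Nat.mul_add, ih]
    ring

lemma comb_id (ν : Fin d → ℕ) :
    2 * ∑ m ∈ Fintype.piFinset (fun i => Finset.Iic (ν i)),
      (∏ i, (ν i).choose (m i)) * ((∑ i, m i).factorial
        * ((∑ i, ν i) - (∑ i, m i) + 1).factorial)
    = ((∑ i, ν i) + 2).factorial := by
  set n := ∑ i, ν i with hn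
  have hmaps : ∀ m ∈ Fintype.piFinset (fun i => Finset.Iic (ν i)),
      (∑ i, m i) ∈ Finset.range (n+1) := by
    intro m hm
    rw [Finset.mem_range, Nat.lt_succ_iff, hn]
    exact Finset.sum_le_sum fun i _ => Finset.mem_Iic.mp (Fintype.mem_piFinset.mp hm i)
  rw [← Finset.sum_fiberwise_of_maps_to hmaps]
  have hinner : ∀ k ∈ Finset.range (n+1),
      ∑ m ∈ (Fintype.piFinset (fun i => Finset.Iic (ν i))).filter
          (fun m => (∑ i, m i) = k),
        (∏ i, (ν i).choose (m i)) * ((∑ i, m i).factorial * (n - (∑ i, m i) + 1).factorial)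
      = n.factorial * (n - k + 1) := by
    intro k hk
    have hk' : k ≤ n := Nat.lt_succ_iff.mp (Finset.mem_range.mp hk)
    have : ∀ m ∈ (Fintype.piFinset (fun i => Finset.Iic (ν i))).filter
        (fun m => (∑ i, m i) = k),
        (∏ i, (ν i).choose (m i)) * ((∑ i, m i).factorial * (n - (∑ i, m i) + 1).factorial)
        = (∏ i, (ν i).choose (m i)) * (k.factorial * (n - k + 1).factorial) := by
      intro m hm
      rw [(Finset.mem_filter.mp hm).2]
    rw [Finset.sum_congr rfl this, ← Finset.sum_mul, multi_vdm ν k]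
    have hfact : (n - k + 1).factorial = (n - k + 1) * (n - k).factorial := rfl
    rw [hfact]
    calc n.choose k * (k.factorial * ((n - k + 1) * (n - k).factorial))
        = (n.choose k * k.factorial * (n-k).factorial) * (n - k + 1) := by ring
      _ = n.factorial * (n - k + 1) := by
          rw [Nat.choose_mul_factorial_mul_factorial hk']
  rw [Finset.sum_congr rfl hinner, ← Finset.mul_sum, ← Nat.mul_assoc, Nat.mul_comm 2,
    Nat.mul_assoc, gauss n]
  calc n.factorial * ((n+1)*(n+2)) = (n+2) * ((n+1) * n.factorial) := by ring
    _ = ((n+2)).factorial := rfl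

end



theorem exp_mul_q_derivative_bound {d : ℕ} {Z : Type*}
    [NormedAddCommGroup Z] [NormedSpace ℝ Z]
    (K M : ℝ) (hK : 0 < K) (hM : 0 < M) (b : Fin d → ℝ) (hb : ∀ j, 0 < b j)
    (Φ : (Fin d → ℝ) → ℝ) (hΦ : ContDiff ℝ (⊤ : ℕ∞) Φ)
    (q : (Fin d → ℝ) → Z) (hq : ContDiff ℝ (⊤ : ℕ∞) q)
    (hΦbound : ∀ ν : Fin d → ℕ, ∀ y ∈ cube d,
      |pdm ν (fun t => Real.exp (Φ t)) y| ≤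
        K * ((∑ i, ν i).factorial : ℝ) * ∏ i, (Real.exp 1 * b i) ^ ν i)
    (hqbound : ∀ ν : Fin d → ℕ, ∀ y ∈ cube d,
      ‖pdm ν q y‖ ≤ M * (((∑ i, ν i) + 1).factorial : ℝ) * ∏ i, b i ^ ν i) :
    ∀ ν : Fin d → ℕ, ∀ y ∈ cube d,
      ‖pdm ν (fun t => Real.exp (Φ t) • q t) y‖ ≤
        (K * M / 2) * (((∑ i, ν i) + 2).factorial : ℝ) *
          ∏ i, (Real.exp 1 * b i) ^ ν i := by
  intro ν y hy
  have hE : ContDiff ℝ (⊤ : ℕ∞) (fun t => Real.exp (Φ t)) := Real.contDiff_exp.comp hΦ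
  have hlei := pdm_leibniz ν hE hq
  rw [hlei]
  have hone : (1:ℝ) ≤ Real.exp 1 := Real.one_le_exp (by norm_num)
  have hterm : ∀ m ∈ Fintype.piFinset (fun i => Finset.Iic (ν i)),
      ‖(∏ i, ((ν i).choose (m i) : ℝ)) •
        (pdm m (fun t => Real.exp (Φ t)) y • pdm (fun i => ν i - m i) q y)‖
      ≤ (K * M * ∏ i, (Real.exp 1 * b i) ^ ν i) *
          ((∏ i, ((ν i).choose (m i) : ℝ)) *
            ((∑ i, m i).factorial * (((∑ i, ν i) - ∑ i, m i) + 1).factorial)) := by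
    intro m hm
    have hmle : ∀ i, m i ≤ ν i := fun i => Finset.mem_Iic.mp (Fintype.mem_piFinset.mp hm i)
    have hc0 : (0:ℝ) ≤ ∏ i, ((ν i).choose (m i) : ℝ) :=
      Finset.prod_nonneg fun i _ => by positivity
    have h1 := hΦbound m y hy
    have h2 := hqbound (fun i => ν i - m i) y hy
    have hsub : ∑ i, (ν i - m i) = (∑ i, ν i) - ∑ i, m i :=
      Finset.sum_tsub_distrib Finset.univ (fun i _ => hmle i)
    rw [hsub] at h2
    have hP : (∏ i, (Real.exp 1 * b i) ^ m i) * (∏ i, b i ^ (ν i - m i))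
        ≤ ∏ i, (Real.exp 1 * b i) ^ ν i := by
      rw [← Finset.prod_mul_distrib]
      refine Finset.prod_le_prod (fun i _ => ?_) (fun i _ => ?_)
      · have hbi := (hb i).le
        positivity
      have hb' := (hb i).le
      have hbe : b i ^ (ν i - m i) ≤ (Real.exp 1 * b i) ^ (ν i - m i) :=
        pow_le_pow_left₀ hb' (le_mul_of_one_le_left hb' hone) _
      calc (Real.exp 1 * b i) ^ m i * b i ^ (ν i - m i)
          ≤ (Real.exp 1 * b i) ^ m i * (Real.exp 1 * b i) ^ (ν i - m i) := by
            refine mul_le_mul_of_nonneg_left hbe (by positivity)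
        _ = (Real.exp 1 * b i) ^ ν i := by
            rw [← pow_add, Nat.add_sub_cancel' (hmle i)]
    rw [norm_smul, norm_smul, Real.norm_of_nonneg hc0, Real.norm_eq_abs]
    have hz : (0:ℝ) ≤ ‖pdm (fun i => ν i - m i) q y‖ := norm_nonneg _
    have hb1 : (0:ℝ) ≤ K * ((∑ i, m i).factorial : ℝ) * ∏ i, (Real.exp 1 * b i) ^ m i := by
      have hp : (0:ℝ) ≤ ∏ i, (Real.exp 1 * b i) ^ m i :=
        Finset.prod_nonneg fun i _ => by have := (hb i).le; positivity
      exact mul_nonneg (mul_nonneg hK.le (Nat.cast_nonneg _)) hp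
    calc (∏ i, ((ν i).choose (m i) : ℝ)) *
          (|pdm m (fun t => Real.exp (Φ t)) y| * ‖pdm (fun i => ν i - m i) q y‖)
        ≤ (∏ i, ((ν i).choose (m i) : ℝ)) *
            ((K * ((∑ i, m i).factorial : ℝ) * ∏ i, (Real.exp 1 * b i) ^ m i) *
              (M * ((((∑ i, ν i) - ∑ i, m i) + 1).factorial : ℝ) * ∏ i, b i ^ (ν i - m i))) := by
          refine mul_le_mul_of_nonneg_left ?_ hc0
          exact mul_le_mul h1 h2 hz hb1
      _ = ((∏ i, ((ν i).choose (m i) : ℝ)) *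
            (((∑ i, m i).factorial : ℝ) * ((((∑ i, ν i) - ∑ i, m i) + 1).factorial : ℝ)) * (K * M)) *
              ((∏ i, (Real.exp 1 * b i) ^ m i) * (∏ i, b i ^ (ν i - m i))) := by ring
      _ ≤ ((∏ i, ((ν i).choose (m i) : ℝ)) *
            (((∑ i, m i).factorial : ℝ) * ((((∑ i, ν i) - ∑ i, m i) + 1).factorial : ℝ)) * (K * M)) *
              (∏ i, (Real.exp 1 * b i) ^ ν i) := by
          refine mul_le_mul_of_nonneg_left hP ?_
          refine mul_nonneg (mul_nonneg hc0 ?_) (mul_nonneg hK.le hM.le)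
          exact mul_nonneg (Nat.cast_nonneg _) (Nat.cast_nonneg _)
      _ = (K * M * ∏ i, (Real.exp 1 * b i) ^ ν i) *
            ((∏ i, ((ν i).choose (m i) : ℝ)) *
              ((∑ i, m i).factorial * (((∑ i, ν i) - ∑ i, m i) + 1).factorial)) := by
          ring
  have hcomb : ∑ m ∈ Fintype.piFinset (fun i => Finset.Iic (ν i)),
      (∏ i, ((ν i).choose (m i) : ℝ)) *
        ((∑ i, m i).factorial * (((∑ i, ν i) - ∑ i, m i) + 1).factorial)
      = (((∑ i, ν i) + 2).factorial : ℝ) / 2 := by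
    have h := comb_id ν
    have h2 : (2:ℝ) * ∑ m ∈ Fintype.piFinset (fun i => Finset.Iic (ν i)),
        (∏ i, ((ν i).choose (m i) : ℝ)) *
          ((∑ i, m i).factorial * (((∑ i, ν i) - ∑ i, m i) + 1).factorial)
        = (((∑ i, ν i) + 2).factorial : ℝ) := by
      exact_mod_cast congrArg (Nat.cast (R := ℝ)) h
    linarith
  calc ‖∑ m ∈ Fintype.piFinset (fun i => Finset.Iic (ν i)),
        (∏ i, ((ν i).choose (m i) : ℝ)) •
          (pdm m (fun t => Real.exp (Φ t)) y • pdm (fun i => ν i - m i) q y)‖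
      ≤ ∑ m ∈ Fintype.piFinset (fun i => Finset.Iic (ν i)),
        ‖(∏ i, ((ν i).choose (m i) : ℝ)) •
          (pdm m (fun t => Real.exp (Φ t)) y • pdm (fun i => ν i - m i) q y)‖ :=
        norm_sum_le _ _
    _ ≤ ∑ m ∈ Fintype.piFinset (fun i => Finset.Iic (ν i)),
        (K * M * ∏ i, (Real.exp 1 * b i) ^ ν i) *
          ((∏ i, ((ν i).choose (m i) : ℝ)) *
            ((∑ i, m i).factorial * (((∑ i, ν i) - ∑ i, m i) + 1).factorial)) :=
        Finset.sum_le_sum hterm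
    _ = (K * M * ∏ i, (Real.exp 1 * b i) ^ ν i) *
          ∑ m ∈ Fintype.piFinset (fun i => Finset.Iic (ν i)),
            (∏ i, ((ν i).choose (m i) : ℝ)) *
              ((∑ i, m i).factorial * (((∑ i, ν i) - ∑ i, m i) + 1).factorial) :=
        (Finset.mul_sum _ _ _).symm
    _ = (K * M * ∏ i, (Real.exp 1 * b i) ^ ν i) * ((((∑ i, ν i) + 2).factorial : ℝ) / 2) := by
        rw [hcomb]
    _ = (K * M / 2) * (((∑ i, ν i) + 2).factorial : ℝ) * ∏ i, (Real.exp 1 * b i) ^ ν i := by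
        ring
end
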